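/- arXiv:1803.07897 — 8 statements merged into one kernel-verified Lean document; each statement's English description precedes it below -/
import Mathlib

section
/- A category C is Möbius (i.e., every morphism has only finitely many nondegenerate decompositions in total over all lengths) if and only if C is locally finite (every morphism has finitely many 2-decompositions) and every morphism has finite length (there is a bound n such that no decomposition of the morphism into more than n non-identity morphisms exists). -/
open scoped Classical TensorProduct

/-- The data of a (small, strict) category: objects `O`, morphisms `M`,
source and target maps, identities, and a (guarded) composition.
`comp a b` is the composite `a ∘ b` (first `b`, then `a`); its value is
only relevant when `src a = tgt b`. -/
structure CatStruct (O : Type) (M : Type) where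
  src : M → O
  tgt : M → O
  id : O → M
  comp : M → M → M

namespace CatStruct

variable {O M : Type}

/-- The axioms making a `CatStruct` an honest category. -/
structure IsCat (C : CatStruct O M) : Prop where
  src_id : ∀ x, C.src (C.id x) = x
  tgt_id : ∀ x, C.tgt (C.id x) = x
  src_comp : ∀ a b, C.src a = C.tgt b → C.src (C.comp a b) = C.src b
  tgt_comp : ∀ a b, C.src a = C.tgt b → C.tgt (C.comp a b) = C.tgt a
  id_comp : ∀ f, C.comp (C.id (C.tgt f)) f = f
  comp_id : ∀ f, C.comp f (C.id (C.src f)) = f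
  assoc : ∀ a b c, C.src a = C.tgt b → C.src b = C.tgt c →
    C.comp (C.comp a b) c = C.comp a (C.comp b c)

/-- `f` is an identity morphism. -/
def IsId (C : CatStruct O M) (f : M) : Prop := ∃ x, f = C.id x

/-- The set of 2-decompositions `(a, b)` with `a ∘ b = f`. -/
def N2 (C : CatStruct O M) (f : M) : Set (M × M) :=
  {p | C.src p.1 = C.tgt p.2 ∧ C.comp p.1 p.2 = f}

/-- `ComposesTo C [a₁, …, aₙ] f` means the `aᵢ` are composable and
`a₁ ∘ ⋯ ∘ aₙ = f`. -/
inductive ComposesTo (C : CatStruct O M) : List M → M → Prop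
  | single (f : M) : ComposesTo C [f] f
  | cons (a : M) {l : List M} {f : M} (h : ComposesTo C l f)
      (hc : C.src a = C.tgt f) : ComposesTo C (a :: l) (C.comp a f)

/-- A list of morphisms is nondegenerate if it contains no identities. -/
def NonDeg (C : CatStruct O M) (l : List M) : Prop := ∀ a ∈ l, ¬ C.IsId a

/-- Locally finite: every morphism has finitely many 2-decompositions. -/
def LocallyFinite (C : CatStruct O M) : Prop := ∀ f, (C.N2 f).Finite

/-- Möbius: every morphism has, in total over all lengths, finitely many
nondegenerate decompositions. -/
def Mobius (C : CatStruct O M) : Prop :=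
  ∀ f, {l : List M | C.ComposesTo l f ∧ C.NonDeg l}.Finite

/-- `f` has finite length: there is a bound on the lengths of its
nondegenerate decompositions. -/
def FiniteLength (C : CatStruct O M) (f : M) : Prop :=
  ∃ n, ∀ l, C.ComposesTo l f → C.NonDeg l → l.length ≤ n

end CatStruct

/-- The data of a strict monoidal category: a category together with a
monoidal product on objects and on morphisms and a unit object. -/
structure MonCatStruct (O : Type) (M : Type) extends CatStruct O M where
  objMul : O → O → O
  one : O
  mul : M → M → M

namespace MonCatStruct

variable {O M : Type}

/-- The axioms of a strict monoidal category. -/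
structure IsMonCat (C : MonCatStruct O M) : Prop where
  toIsCat : C.toCatStruct.IsCat
  src_mul : ∀ a b, C.src (C.mul a b) = C.objMul (C.src a) (C.src b)
  tgt_mul : ∀ a b, C.tgt (C.mul a b) = C.objMul (C.tgt a) (C.tgt b)
  id_mul : ∀ x y, C.mul (C.id x) (C.id y) = C.id (C.objMul x y)
  mul_assoc : ∀ a b c, C.mul (C.mul a b) c = C.mul a (C.mul b c)
  one_mul : ∀ f, C.mul (C.id C.one) f = f
  mul_one : ∀ f, C.mul f (C.id C.one) = f
  objMul_assoc : ∀ x y z, C.objMul (C.objMul x y) z = C.objMul x (C.objMul y z)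
  objOne_mul : ∀ x, C.objMul C.one x = x
  objMul_one : ∀ x, C.objMul x C.one = x
  interchange : ∀ a b c d, C.src a = C.tgt b → C.src c = C.tgt d →
    C.mul (C.comp a b) (C.comp c d) = C.comp (C.mul a c) (C.mul b d)

/-- The monoidal product has the unique lifting of factorisations (ULF)
property: for all morphisms `f, g` the induced map
`N₂(f) × N₂(g) → N₂(f·g)` is a bijection. -/
def MulULF (C : MonCatStruct O M) : Prop :=
  ∀ f g, Set.BijOn
    (fun pq : (M × M) × (M × M) => (C.mul pq.1.1 pq.2.1, C.mul pq.1.2 pq.2.2))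
    (C.toCatStruct.N2 f ×ˢ C.toCatStruct.N2 g)
    (C.toCatStruct.N2 (C.mul f g))

/-- The monoid of objects is a group. -/
def ObjGroup (C : MonCatStruct O M) : Prop :=
  ∀ x, ∃ y, C.objMul x y = C.one ∧ C.objMul y x = C.one

/-- A strict 2-group: a strict monoidal groupoid all of whose objects are
invertible with respect to the monoidal product. -/
def TwoGroup (C : MonCatStruct O M) : Prop :=
  C.IsMonCat ∧
  (∀ f, ∃ g, C.src g = C.tgt f ∧ C.tgt g = C.src f ∧
    C.comp f g = C.id (C.tgt f) ∧ C.comp g f = C.id (C.src f)) ∧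
  C.ObjGroup

end MonCatStruct

namespace CatStruct

lemma ComposesTo.ne_nil {O M : Type} {C : CatStruct O M} {l : List M} {f : M}
    (h : C.ComposesTo l f) : l ≠ [] := by
  cases h <;> simp

lemma finite_fixed_length {O M : Type} {C : CatStruct O M}
    (hLF : C.LocallyFinite) :
    ∀ n f, {l : List M | C.ComposesTo l f ∧ l.length = n}.Finite := by
  intro n
  induction n with
  | zero =>
    intro f
    convert Set.finite_empty
    ext l
    simp only [Set.mem_setOf_eq, Set.mem_empty_iff_false, iff_false, not_and]
    intro h hl
    exact h.ne_nil (List.length_eq_zero_iff.mp hl)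
  | succ n ih =>
    intro f
    apply Set.Finite.subset
      (Set.Finite.union (Set.finite_singleton [f])
        ((hLF f).biUnion (fun p _ => (ih p.2).image (p.1 :: ·))))
    rintro l ⟨h, hl⟩
    cases h with
    | single => left; rfl
    | @cons a l' f' h hc =>
      right
      refine Set.mem_biUnion (show (a, f') ∈ C.N2 _ from ⟨hc, rfl⟩) ?_
      exact ⟨l', ⟨h, by simpa using hl⟩, rfl⟩

end CatStruct

/-- A category is Möbius iff it is locally finite and every
morphism has finite length. -/
theorem mobius_iff_locallyFinite_and_finiteLength {O M : Type}
    (C : CatStruct O M) (hC : C.IsCat) :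
    C.Mobius ↔ C.LocallyFinite ∧ ∀ f, C.FiniteLength f := by
  constructor
  · intro hM
    constructor
    · -- locally finite
      intro f
      have hinj : Function.Injective (fun p : M × M => [p.1, p.2]) := by
        intro p q h
        simp only [List.cons.injEq, and_true] at h
        exact Prod.ext h.1 h.2
      apply Set.Finite.subset
        (Set.Finite.union
          ((Set.finite_singleton (f, C.id (C.src f))).insert (C.id (C.tgt f), f))
          (Set.Finite.preimage hinj.injOn (hM f)))
      rintro ⟨a, b⟩ ⟨hc, he⟩
      by_cases ha : C.IsId a
      · obtain ⟨x, rfl⟩ := ha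
        have hx : x = C.tgt b := by rw [← hC.src_id x]; exact hc
        subst hx
        rw [hC.id_comp] at he
        subst he
        exact Set.mem_union_left _ (Set.mem_insert _ _)
      · by_cases hb : C.IsId b
        · obtain ⟨y, rfl⟩ := hb
          have hy : y = C.src a := by rw [← hC.tgt_id y]; exact hc.symm
          subst hy
          rw [hC.comp_id] at he
          subst he
          exact Set.mem_union_left _ (Set.mem_insert_of_mem _ rfl)
        · refine Set.mem_union_right _ ?_
          refine ⟨?_, ?_⟩
          · have := CatStruct.ComposesTo.cons a (CatStruct.ComposesTo.single b) hc
            rwa [he] at this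
          · intro m hm
            simp only [List.mem_cons, List.mem_singleton, List.not_mem_nil,
              or_false] at hm
            rcases hm with rfl | rfl
            · exact ha
            · exact hb
    · -- finite length
      intro f
      refine ⟨(hM f).toFinset.sup List.length, ?_⟩
      intro l h hn
      exact Finset.le_sup (f := List.length)
        ((hM f).mem_toFinset.mpr ⟨h, hn⟩)
  · rintro ⟨hLF, hFL⟩ f
    obtain ⟨n, hn⟩ := hFL f
    apply Set.Finite.subset
      ((Finset.range (n + 1)).finite_toSet.biUnion
        (fun k _ => CatStruct.finite_fixed_length hLF k f))
    rintro l ⟨h, hnd⟩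
    exact Set.mem_biUnion
      (by simpa using Nat.lt_succ_of_le (hn l h hnd)) ⟨h, rfl⟩
end

section
/- In a Möbius category, every isomorphism is an identity morphism. -/
open scoped Classical TensorProduct

/-- In a Möbius category every isomorphism is an identity. -/
theorem mobius_iso_is_identity {O M : Type} (C : CatStruct O M)
    (hC : C.IsCat) (hM : C.Mobius) :
    ∀ f g : M, C.src f = C.tgt g → C.src g = C.tgt f →
      C.comp f g = C.id (C.tgt f) → C.comp g f = C.id (C.tgt g) →
      C.IsId f := by
  intro f g hfg hgf hcfg hcgf
  by_contra hf
  -- g is not an identity either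
  have hg : ¬ C.IsId g := by
    rintro ⟨x, rfl⟩
    apply hf
    have hx : C.src f = x := by rw [hfg, hC.tgt_id]
    refine ⟨C.tgt f, ?_⟩
    calc f = C.comp f (C.id (C.src f)) := (hC.comp_id f).symm
    _ = C.comp f (C.id x) := by rw [hx]
    _ = C.id (C.tgt f) := hcfg
  -- alternating lists
  let alt : ℕ → List M := fun n => Nat.rec [f] (fun _ l => f :: g :: l) n
  have halt : ∀ n, C.ComposesTo (alt n) f ∧ C.NonDeg (alt n) := by
    intro n
    induction n with
    | zero =>
      exact ⟨CatStruct.ComposesTo.single f, by rintro a ha; simp [alt] at ha; subst ha; exact hf⟩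
    | succ k ih =>
      constructor
      · have h1 : C.ComposesTo (g :: alt k) (C.comp g f) :=
          CatStruct.ComposesTo.cons g ih.1 hgf
        rw [hcgf] at h1
        have h2 : C.ComposesTo (f :: g :: alt k) (C.comp f (C.id (C.tgt g))) :=
          CatStruct.ComposesTo.cons f h1 (by rw [hC.tgt_id, hfg])
        have : C.comp f (C.id (C.tgt g)) = f := by
          rw [← hfg]; exact hC.comp_id f
        rwa [this] at h2
      · intro a ha
        simp only [alt, List.mem_cons] at ha
        rcases ha with rfl | rfl | h
        · exact hf
        · exact hg
        · exact ih.2 a h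
  have hlen : ∀ n, (alt n).length = 2 * n + 1 := by
    intro n; induction n with
    | zero => rfl
    | succ k ih => simp [alt] at ih ⊢; omega
  have hinj : Function.Injective alt := by
    intro m n h
    have := congrArg List.length h
    rw [hlen, hlen] at this
    omega
  exact (Set.infinite_of_injective_forall_mem hinj (fun n => halt n)) (hM f)
end

section
/- In a Möbius category, every idempotent endomorphism is an identity morphism. -/
open scoped Classical TensorProduct

/-- In a Möbius category every idempotent endomorphism is an
identity. -/
theorem mobius_idempotent_is_identity {O M : Type} (C : CatStruct O M)
    (hC : C.IsCat) (hM : C.Mobius) :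
    ∀ e : M, C.src e = C.tgt e → C.comp e e = e → e = C.id (C.src e) := by
  intro e hst hidem
  by_contra hne
  have hnid : ¬ C.IsId e := by
    rintro ⟨x, rfl⟩
    exact hne (by rw [hC.src_id])
  have hrep : ∀ n, C.ComposesTo (List.replicate (n+1) e) e := by
    intro n
    induction n with
    | zero => exact CatStruct.ComposesTo.single e
    | succ k ih =>
      have := CatStruct.ComposesTo.cons (C := C) e ih hst
      rwa [hidem] at this
  have hmem : ∀ n, List.replicate (n+1) e ∈
      {l : List M | C.ComposesTo l e ∧ C.NonDeg l} := by
    intro n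
    refine ⟨hrep n, fun a ha => ?_⟩
    rw [List.mem_replicate] at ha
    rw [ha.2]; exact hnid
  have hinj : Function.Injective (fun n : ℕ =>
      (List.replicate (n+1) e : List M)) := by
    intro a b hab
    simpa using congrArg List.length hab
  exact Set.infinite_of_injective_forall_mem hinj hmem (hM e)
end

section
/- Let C be a Möbius strict monoidal category whose monoidal product functor C × C → C has the ULF property. Then the incidence coalgebra structure and the algebra structure given by linearizing the monoidal product make kC into a bialgebra over any field k. -/
open scoped Classical TensorProduct

/-!
Möbius implies local finiteness, so the incidence coproduct is a finite sum. Coassociativity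
holds because both iterated coproducts of `f` sum over the factorisations `x ∘ y ∘ z = f`, and
the counit picks out the trivial factorisations `id ∘ f` and `f ∘ id`. ULF identifies the
factorisations of `f ⊗ g` with pairs of factorisations of `f` and `g`, which is multiplicativity
of the coproduct. Finally, an identity has no nondegenerate factorisation `a ∘ b` (repeating it
would give nondegenerate decompositions `a ∘ b ∘ a ∘ b ∘ ⋯` of every even length), so `N₂(id)`
is a singleton; with ULF this shows that `f ⊗ g` is an identity only if `f` and `g` are, which
makes the counit multiplicative.
-/

namespace CatStruct

variable {O M : Type} {C : CatStruct O M}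

namespace IsCat

variable (hC : C.IsCat)
include hC

theorem id_tgt_mem_N2 (f : M) : (C.id (C.tgt f), f) ∈ C.N2 f :=
  ⟨hC.src_id _, hC.id_comp f⟩

theorem id_src_mem_N2 (f : M) : (f, C.id (C.src f)) ∈ C.N2 f :=
  ⟨(hC.tgt_id _).symm, hC.comp_id f⟩

theorem eq_of_mem_N2_of_isId_fst {f : M} {p : M × M} (hp : p ∈ C.N2 f) (hid : C.IsId p.1) :
    p = (C.id (C.tgt f), f) := by
  obtain ⟨a, b⟩ := p
  obtain ⟨x, rfl⟩ := hid
  obtain ⟨hxb, rfl⟩ := hp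
  simp only [hC.src_id] at hxb
  subst hxb
  simp [hC.id_comp]

theorem eq_of_mem_N2_of_isId_snd {f : M} {p : M × M} (hp : p ∈ C.N2 f) (hid : C.IsId p.2) :
    p = (f, C.id (C.src f)) := by
  obtain ⟨a, b⟩ := p
  obtain ⟨x, rfl⟩ := hid
  obtain ⟨hax, rfl⟩ := hp
  simp only [hC.tgt_id] at hax
  subst hax
  simp [hC.comp_id]

theorem isId_of_N2_subsingleton {f : M} (h : (C.N2 f).Subsingleton) : C.IsId f :=
  ⟨C.tgt f, congrArg Prod.fst (h (hC.id_src_mem_N2 f) (hC.id_tgt_mem_N2 f))⟩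

theorem comp_mem_N2_of_mem_N2_fst {f a b x y : M} (hab : (a, b) ∈ C.N2 f)
    (hxy : (x, y) ∈ C.N2 a) : (x, C.comp y b) ∈ C.N2 f ∧ (y, b) ∈ C.N2 (C.comp y b) := by
  obtain ⟨hab, rfl⟩ := hab
  obtain ⟨hxy, rfl⟩ := hxy
  have hyb : C.src y = C.tgt b := by rw [← hab, hC.src_comp x y hxy]
  exact ⟨⟨by rw [hC.tgt_comp y b hyb, hxy], (hC.assoc x y b hxy hyb).symm⟩, hyb, rfl⟩

theorem comp_mem_N2_of_mem_N2_snd {f a b x y : M} (hab : (a, b) ∈ C.N2 f)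
    (hxy : (x, y) ∈ C.N2 b) : (C.comp a x, y) ∈ C.N2 f ∧ (a, x) ∈ C.N2 (C.comp a x) := by
  obtain ⟨hab, rfl⟩ := hab
  obtain ⟨hxy, rfl⟩ := hxy
  have hax : C.src a = C.tgt x := by rw [hab, hC.tgt_comp x y hxy]
  exact ⟨⟨by rw [hC.src_comp a x hax, hxy], hC.assoc a x y hax hxy⟩, hax, rfl⟩

end IsCat

theorem ComposesTo.pair {f a b : M} (h : (a, b) ∈ C.N2 f) : C.ComposesTo [a, b] f := by
  obtain ⟨hab, rfl⟩ := h
  exact .cons a (.single b) hab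

theorem ComposesTo.cons_cons_of_mem_N2_id (hC : C.IsCat) {z : O} {a b : M} {l : List M}
    (hab : (a, b) ∈ C.N2 (C.id z)) (hl : C.ComposesTo l (C.id z)) :
    C.ComposesTo (a :: b :: l) (C.id z) := by
  obtain ⟨hab, hcomp⟩ := hab
  have hbz : C.src b = z := by rw [← hC.src_comp a b hab, hcomp, hC.src_id]
  have hbl : C.ComposesTo (b :: l) b := by
    simpa [← hbz, hC.comp_id] using hl.cons b (by rw [hC.tgt_id, hbz])
  simpa [hcomp] using hbl.cons a hab

theorem Mobius.locallyFinite (hC : C.IsCat) (hMob : C.Mobius) : C.LocallyFinite := by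
  intro f
  let nondeg := {p ∈ C.N2 f | ¬ C.IsId p.1 ∧ ¬ C.IsId p.2}
  have hnondeg : nondeg.Finite := by
    refine Set.Finite.of_finite_image (f := fun p : M × M => [p.1, p.2]) ((hMob f).subset ?_) ?_
    · rintro _ ⟨p, ⟨hp, hp1, hp2⟩, rfl⟩
      refine ⟨ComposesTo.pair hp, ?_⟩
      simp [NonDeg, hp1, hp2]
    · intro p _ q _ h
      simpa [Prod.ext_iff] using h
  refine (hnondeg.union (Set.toFinite {(C.id (C.tgt f), f), (f, C.id (C.src f))})).subset
    fun p hp => ?_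
  by_cases h1 : C.IsId p.1
  · exact .inr (.inl (hC.eq_of_mem_N2_of_isId_fst hp h1))
  by_cases h2 : C.IsId p.2
  · exact .inr (.inr (hC.eq_of_mem_N2_of_isId_snd hp h2))
  exact .inl ⟨hp, h1, h2⟩

theorem Mobius.N2_id (hC : C.IsCat) (hMob : C.Mobius) (z : O) :
    C.N2 (C.id z) = {(C.id z, C.id z)} := by
  refine Set.eq_singleton_iff_unique_mem.mpr ⟨⟨by rw [hC.src_id, hC.tgt_id], ?_⟩, ?_⟩
  · simpa [hC.tgt_id] using hC.id_comp (C.id z)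
  rintro ⟨a, b⟩ hab
  by_cases ha : C.IsId a
  · simpa [hC.tgt_id] using hC.eq_of_mem_N2_of_isId_fst hab ha
  by_cases hb : C.IsId b
  · simpa [hC.src_id] using hC.eq_of_mem_N2_of_isId_snd hab hb
  let rep : ℕ → List M := fun n => (List.replicate (n + 1) [a, b]).flatten
  have hrep : ∀ n, C.ComposesTo (rep n) (C.id z) ∧ C.NonDeg (rep n) := by
    intro n
    refine ⟨?_, by simp [rep, NonDeg, or_imp, forall_and, ha, hb]⟩
    induction n with
    | zero => simpa [rep] using ComposesTo.pair hab
    | succ n ih => simpa [rep, List.replicate_succ] using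
        ComposesTo.cons_cons_of_mem_N2_id hC hab ih
  refine absurd (hMob (C.id z)) (Set.infinite_of_injective_forall_mem ?_ hrep)
  intro m n hmn
  simpa [rep] using congrArg List.length hmn

section Sums

variable (hC : C.IsCat) (hfin : C.LocallyFinite) {β : Type*} [AddCommMonoid β]
include hC

theorem sum_N2_ite_isId_fst (F : M × M → β) (f : M) :
    ∑ p ∈ (hfin f).toFinset, (if C.IsId p.1 then F p else 0) = F (C.id (C.tgt f), f) := by
  rw [Finset.sum_eq_single_of_mem _ ((hfin f).mem_toFinset.mpr (hC.id_tgt_mem_N2 f)),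
    if_pos ⟨_, rfl⟩]
  intro p hp hne
  rw [if_neg (mt (hC.eq_of_mem_N2_of_isId_fst ((hfin f).mem_toFinset.mp hp)) hne)]

theorem sum_N2_ite_isId_snd (F : M × M → β) (f : M) :
    ∑ p ∈ (hfin f).toFinset, (if C.IsId p.2 then F p else 0) = F (f, C.id (C.src f)) := by
  rw [Finset.sum_eq_single_of_mem _ ((hfin f).mem_toFinset.mpr (hC.id_src_mem_N2 f)),
    if_pos ⟨_, rfl⟩]
  intro p hp hne
  rw [if_neg (mt (hC.eq_of_mem_N2_of_isId_snd ((hfin f).mem_toFinset.mp hp)) hne)]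

theorem sum_N2_sum_N2_fst_eq_sum_N2_sum_N2_snd (F : M → M → M → β) (f : M) :
    ∑ p ∈ (hfin f).toFinset, ∑ q ∈ (hfin p.1).toFinset, F q.1 q.2 p.2 =
      ∑ p ∈ (hfin f).toFinset, ∑ q ∈ (hfin p.2).toFinset, F p.1 q.1 q.2 := by
  simp only [Finset.sum_sigma']
  refine Finset.sum_nbij' (fun x => ⟨(x.2.1, C.comp x.2.2 x.1.2), (x.2.2, x.1.2)⟩)
    (fun y => ⟨(C.comp y.1.1 y.2.1, y.2.2), (y.1.1, y.2.1)⟩) ?_ ?_ ?_ ?_ fun _ _ => rfl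
  · rintro ⟨⟨a, b⟩, x, y⟩ h
    simp only [Finset.mem_sigma, Set.Finite.mem_toFinset] at h ⊢
    exact hC.comp_mem_N2_of_mem_N2_fst h.1 h.2
  · rintro ⟨⟨a, b⟩, x, y⟩ h
    simp only [Finset.mem_sigma, Set.Finite.mem_toFinset] at h ⊢
    exact hC.comp_mem_N2_of_mem_N2_snd h.1 h.2
  · rintro ⟨⟨a, b⟩, x, y⟩ h
    simp only [Finset.mem_sigma, Set.Finite.mem_toFinset] at h
    simp [h.2.2]
  · rintro ⟨⟨a, b⟩, x, y⟩ h
    simp only [Finset.mem_sigma, Set.Finite.mem_toFinset] at h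
    simp [h.2.2]

end Sums

section Incidence

variable (C) (k : Type) [CommSemiring k]

open Finsupp TensorProduct

-- `∑ᶠ` is zero on an infinite `N2 f`; the lemmas below assume local finiteness.
noncomputable def incidenceComul : (M →₀ k) →ₗ[k] (M →₀ k) ⊗[k] (M →₀ k) :=
  linearCombination k fun f => ∑ᶠ p ∈ C.N2 f, single p.1 (1 : k) ⊗ₜ[k] single p.2 (1 : k)

noncomputable def incidenceCounit : (M →₀ k) →ₗ[k] k :=
  linearCombination k fun f => if C.IsId f then 1 else 0

variable {C k}

theorem incidenceComul_single (f : M) :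
    C.incidenceComul k (single f 1) =
      ∑ᶠ p ∈ C.N2 f, single p.1 (1 : k) ⊗ₜ[k] single p.2 (1 : k) := by
  simp [incidenceComul]

theorem incidenceComul_single_eq_sum (hfin : C.LocallyFinite) (f : M) :
    C.incidenceComul k (single f 1) =
      ∑ p ∈ (hfin f).toFinset, single p.1 (1 : k) ⊗ₜ[k] single p.2 (1 : k) := by
  rw [incidenceComul_single, finsum_mem_eq_finite_toFinset_sum _ (hfin f)]

theorem incidenceCounit_single (f : M) :
    C.incidenceCounit k (single f 1) = if C.IsId f then 1 else 0 := by
  simp [incidenceCounit]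

variable (hC : C.IsCat) (hfin : C.LocallyFinite)
include hC hfin

theorem incidenceComul_coassoc :
    (TensorProduct.assoc k (M →₀ k) (M →₀ k) (M →₀ k)).toLinearMap ∘ₗ
        map (C.incidenceComul k) LinearMap.id ∘ₗ C.incidenceComul k =
      map LinearMap.id (C.incidenceComul k) ∘ₗ C.incidenceComul k := by
  refine lhom_ext' fun f => LinearMap.ext_ring ?_
  simp only [LinearMap.comp_apply, lsingle_apply, incidenceComul_single_eq_sum hfin, map_sum,
    map_tmul, LinearMap.id_apply, sum_tmul, tmul_sum, LinearEquiv.coe_coe, assoc_tmul]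
  exact sum_N2_sum_N2_fst_eq_sum_N2_sum_N2_snd hC hfin
    (fun x y z => single x 1 ⊗ₜ[k] (single y 1 ⊗ₜ[k] single z 1)) f

theorem incidenceCounit_comul_left :
    (TensorProduct.lid k (M →₀ k)).toLinearMap ∘ₗ
        map (C.incidenceCounit k) LinearMap.id ∘ₗ C.incidenceComul k = LinearMap.id := by
  refine lhom_ext' fun f => LinearMap.ext_ring ?_
  simp only [LinearMap.comp_apply, lsingle_apply, incidenceComul_single_eq_sum hfin, map_sum,
    map_tmul, LinearMap.id_apply, LinearEquiv.coe_coe, lid_tmul, incidenceCounit_single,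
    ite_smul, one_smul, zero_smul]
  exact sum_N2_ite_isId_fst hC hfin (fun p => single p.2 (1 : k)) f

theorem incidenceCounit_comul_right :
    (TensorProduct.rid k (M →₀ k)).toLinearMap ∘ₗ
        map LinearMap.id (C.incidenceCounit k) ∘ₗ C.incidenceComul k = LinearMap.id := by
  refine lhom_ext' fun f => LinearMap.ext_ring ?_
  simp only [LinearMap.comp_apply, lsingle_apply, incidenceComul_single_eq_sum hfin, map_sum,
    map_tmul, LinearMap.id_apply, LinearEquiv.coe_coe, rid_tmul, incidenceCounit_single,
    ite_smul, one_smul, zero_smul]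
  exact sum_N2_ite_isId_snd hC hfin (fun p => single p.1 (1 : k)) f

end Incidence

end CatStruct

section LinearizedMul

open Finsupp

variable {M : Type} (μ : M → M → M) (k : Type) [CommSemiring k]

noncomputable def linearizedMul : (M →₀ k) →ₗ[k] (M →₀ k) →ₗ[k] (M →₀ k) :=
  linearCombination k fun f => lmapDomain k k (μ f)

variable {μ k}

theorem linearizedMul_single_single (f g : M) (r s : k) :
    linearizedMul μ k (single f r) (single g s) = single (μ f g) (r * s) := by
  simp [linearizedMul, smul_single]

theorem linearizedMul_assoc (hμ : ∀ a b c, μ (μ a b) c = μ a (μ b c)) (x y z : M →₀ k) :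
    linearizedMul μ k (linearizedMul μ k x y) z = linearizedMul μ k x (linearizedMul μ k y z) := by
  -- both sides as trilinear maps of `x`, `y`, `z`
  have : (linearizedMul μ k).compr₂ (linearizedMul μ k) =
      ((LinearMap.llcomp k _ _ _).comp (linearizedMul μ k)).compl₂ (linearizedMul μ k) := by
    refine lhom_ext' fun f => LinearMap.ext_ring ?_
    refine lhom_ext' fun g => LinearMap.ext_ring ?_
    refine lhom_ext' fun h => LinearMap.ext_ring ?_
    simp [linearizedMul_single_single, hμ]
  exact congr($this x y z)

theorem linearizedMul_single_one_left {e : M} (he : ∀ a, μ e a = a) :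
    linearizedMul μ k (single e 1) = LinearMap.id :=
  lhom_ext' fun f => LinearMap.ext_ring (by simp [linearizedMul_single_single, he])

theorem linearizedMul_flip_single_one {e : M} (he : ∀ a, μ a e = a) :
    (linearizedMul μ k).flip (single e 1) = LinearMap.id :=
  lhom_ext' fun f => LinearMap.ext_ring (by simp [linearizedMul_single_single, he])

end LinearizedMul

theorem finsum_mem_prod {α β γ : Type*} [AddCommMonoid γ] {s : Set α} {t : Set β}
    (hs : s.Finite) (ht : t.Finite) (F : α × β → γ) :
    ∑ᶠ x ∈ s ×ˢ t, F x = ∑ᶠ a ∈ s, ∑ᶠ b ∈ t, F (a, b) := by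
  rw [finsum_mem_eq_finite_toFinset_sum _ (hs.prod ht), ← hs.toFinset_prod ht,
    Finset.sum_product, finsum_mem_eq_finite_toFinset_sum _ hs]
  simp only [finsum_mem_eq_finite_toFinset_sum _ ht]

namespace MonCatStruct

variable {O M : Type} {C : MonCatStruct O M}

theorem MulULF.isId_mul_iff (hC : C.IsMonCat) (hMob : C.toCatStruct.Mobius) (hULF : C.MulULF)
    {f g : M} : C.IsId (C.mul f g) ↔ C.IsId f ∧ C.IsId g := by
  refine ⟨fun ⟨z, hz⟩ => ?_, fun ⟨⟨x, hx⟩, ⟨y, hy⟩⟩ => ⟨C.objMul x y, by rw [hx, hy, hC.id_mul]⟩⟩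
  have hcat := hC.toIsCat
  have hsub : (C.N2 f ×ˢ C.N2 g).Subsingleton := fun p hp q hq => by
    refine (hULF f g).injOn hp hq ?_
    have hp' := (hULF f g).mapsTo hp
    have hq' := (hULF f g).mapsTo hq
    rw [hz, hMob.N2_id hcat] at hp' hq'
    exact hp'.trans hq'.symm
  exact ⟨hcat.isId_of_N2_subsingleton fun p hp q hq =>
      congrArg Prod.fst (hsub (Set.mk_mem_prod hp (hcat.id_tgt_mem_N2 g))
        (Set.mk_mem_prod hq (hcat.id_tgt_mem_N2 g))),
    hcat.isId_of_N2_subsingleton fun p hp q hq =>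
      congrArg Prod.snd (hsub (Set.mk_mem_prod (hcat.id_tgt_mem_N2 f) hp)
        (Set.mk_mem_prod (hcat.id_tgt_mem_N2 f) hq))⟩

theorem MulULF.incidenceComul_single_mul {k : Type} [CommSemiring k] (hULF : C.MulULF)
    (hfin : C.toCatStruct.LocallyFinite) (f g : M) :
    C.incidenceComul k (Finsupp.single (C.mul f g) 1) =
      ∑ᶠ p ∈ C.N2 f, ∑ᶠ q ∈ C.N2 g,
        Finsupp.single (C.mul p.1 q.1) (1 : k) ⊗ₜ[k] Finsupp.single (C.mul p.2 q.2) (1 : k) := by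
  rw [CatStruct.incidenceComul_single]
  exact (finsum_mem_eq_of_bijOn _ (hULF f g) fun _ _ => rfl).symm.trans
    (finsum_mem_prod (hfin f) (hfin g) _)

end MonCatStruct

/-- If `C` is a Möbius strict monoidal category whose monoidal
product is ULF, then the incidence coalgebra together with the linearised
monoidal product make `kC` a bialgebra. -/
theorem incidence_bialgebra {O M : Type} (C : MonCatStruct O M)
    (hC : C.IsMonCat) (hMob : C.toCatStruct.Mobius) (hULF : C.MulULF)
    (k : Type) [Field k] :
    ∃ (Δ : (M →₀ k) →ₗ[k] TensorProduct k (M →₀ k) (M →₀ k))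
      (ε : (M →₀ k) →ₗ[k] k)
      (m : (M →₀ k) →ₗ[k] (M →₀ k) →ₗ[k] (M →₀ k)),
      -- the incidence coproduct and counit
      (∀ f : M, Δ (Finsupp.single f 1) =
        ∑ᶠ p ∈ C.toCatStruct.N2 f,
          Finsupp.single p.1 (1 : k) ⊗ₜ[k] Finsupp.single p.2 (1 : k)) ∧
      (∀ f : M, ε (Finsupp.single f 1) =
        if C.toCatStruct.IsId f then (1 : k) else 0) ∧
      -- coalgebra axioms
      (∀ v, (TensorProduct.assoc k (M →₀ k) (M →₀ k) (M →₀ k))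
          ((TensorProduct.map Δ LinearMap.id) (Δ v)) =
        (TensorProduct.map LinearMap.id Δ) (Δ v)) ∧
      (∀ v, (TensorProduct.lid k (M →₀ k))
          ((TensorProduct.map ε LinearMap.id) (Δ v)) = v) ∧
      (∀ v, (TensorProduct.rid k (M →₀ k))
          ((TensorProduct.map LinearMap.id ε) (Δ v)) = v) ∧
      -- algebra structure: the linearised monoidal product
      (∀ f g : M, m (Finsupp.single f 1) (Finsupp.single g 1) =
        Finsupp.single (C.mul f g) (1 : k)) ∧
      (∀ a b c, m (m a b) c = m a (m b c)) ∧
      (∀ a, m (Finsupp.single (C.id C.one) 1) a = a) ∧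
      (∀ a, m a (Finsupp.single (C.id C.one) 1) = a) ∧
      -- bialgebra compatibility
      (∀ f g : M, Δ (Finsupp.single (C.mul f g) 1) =
        ∑ᶠ p ∈ C.toCatStruct.N2 f, ∑ᶠ q ∈ C.toCatStruct.N2 g,
          Finsupp.single (C.mul p.1 q.1) (1 : k) ⊗ₜ[k]
            Finsupp.single (C.mul p.2 q.2) (1 : k)) ∧
      (∀ f g : M, ε (m (Finsupp.single f 1) (Finsupp.single g 1)) =
        ε (Finsupp.single f 1) * ε (Finsupp.single g 1)) ∧
      (Δ (Finsupp.single (C.id C.one) 1) =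
        Finsupp.single (C.id C.one) (1 : k) ⊗ₜ[k]
          Finsupp.single (C.id C.one) (1 : k)) ∧
      (ε (Finsupp.single (C.id C.one) 1) = 1) := by
  have hcat := hC.toIsCat
  have hfin := hMob.locallyFinite hcat
  refine ⟨C.incidenceComul k, C.incidenceCounit k, linearizedMul C.mul k,
    CatStruct.incidenceComul_single, CatStruct.incidenceCounit_single,
    LinearMap.congr_fun (CatStruct.incidenceComul_coassoc hcat hfin),
    LinearMap.congr_fun (CatStruct.incidenceCounit_comul_left hcat hfin),
    LinearMap.congr_fun (CatStruct.incidenceCounit_comul_right hcat hfin),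
    fun f g => by rw [linearizedMul_single_single, mul_one],
    linearizedMul_assoc hC.mul_assoc,
    LinearMap.congr_fun (linearizedMul_single_one_left hC.one_mul),
    LinearMap.congr_fun (linearizedMul_flip_single_one hC.mul_one),
    hULF.incidenceComul_single_mul hfin, fun f g => ?_, ?_, ?_⟩
  · simp only [linearizedMul_single_single, mul_one, CatStruct.incidenceCounit_single,
      hULF.isId_mul_iff hC hMob, ite_and, ite_mul, one_mul, zero_mul]
  · rw [CatStruct.incidenceComul_single, hMob.N2_id hcat, finsum_mem_singleton]
  · rw [CatStruct.incidenceCounit_single, if_pos ⟨C.one, rfl⟩]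
end

section
/- Assume the path category C_Q of a quiver Q carries a strict monoidal structure such that the vertex set Q_0 with the induced product forms a group. Then for any vertex a and any arrow f (a path of length 1), the morphisms i_a · f and f · i_a are again arrows (paths of length 1). Consequently the monoidal product defines commuting left and right Q_0-actions on the arrow set Q_1. -/
open scoped Classical TensorProduct

/-- `C` is the path category of a quiver with arrow set `A`: every
non-identity morphism decomposes uniquely as a composite of arrows, and no
identity is a composite of arrows. -/
structure IsPathCat {O M : Type} (C : CatStruct O M) (A : Set M) : Prop where
  arrow_decomp : ∀ f, ¬ C.IsId f →
    ∃! l : List M, (∀ a ∈ l, a ∈ A) ∧ C.ComposesTo l f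
  id_no_decomp : ∀ f, C.IsId f →
    ¬ ∃ l : List M, (∀ a ∈ l, a ∈ A) ∧ C.ComposesTo l f

private lemma composesTo_ne_nil {O M : Type} {C : CatStruct O M} {l : List M} {f : M}
    (h : C.ComposesTo l f) : l ≠ [] := by
  cases h <;> simp

private lemma composesTo_append {O M : Type} {C : CatStruct O M} (hCat : C.IsCat)
    {lp lq : List M} {p q : M} (hp : C.ComposesTo lp p) (hq : C.ComposesTo lq q)
    (hpq : C.src p = C.tgt q) : C.ComposesTo (lp ++ lq) (C.comp p q) := by
  induction hp generalizing lq q with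
  | single f => exact .cons f hq hpq
  | @cons a l f h hc ih =>
      have hsf : C.src f = C.tgt q := by rw [← hCat.src_comp a f hc]; exact hpq
      rw [hCat.assoc a f q hc hsf]
      exact .cons a (ih hq hsf) (by rw [hCat.tgt_comp f q hsf]; exact hc)

private lemma arrow_not_id {O M : Type} {C : CatStruct O M} {A : Set M}
    (hP : IsPathCat C A) {f : M} (hf : f ∈ A) : ¬ C.IsId f := fun h =>
  hP.id_no_decomp f h ⟨[f], by simpa using hf, .single f⟩

private lemma decomp_eq_single {O M : Type} {C : CatStruct O M} {A : Set M}
    (hP : IsPathCat C A) {f : M} (hf : f ∈ A) {l : List M}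
    (hlA : ∀ a ∈ l, a ∈ A) (hl : C.ComposesTo l f) : l = [f] := by
  obtain ⟨l', _, huniq⟩ := hP.arrow_decomp f (arrow_not_id hP hf)
  have h1 := huniq l ⟨hlA, hl⟩
  have h2 := huniq [f] ⟨by simpa using hf, .single f⟩
  rw [h1, h2]

private lemma left_closed {O M : Type}
    (C : MonCatStruct O M) (hC : C.IsMonCat) (A : Set M)
    (hP : IsPathCat C.toCatStruct A) (hG : C.ObjGroup) (x : O) (f : M) (hf : f ∈ A) :
    C.mul (C.id x) f ∈ A := by
  have hCat := hC.toIsCat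
  obtain ⟨y, hxy, hyx⟩ := hG x
  -- multiplying by id y recovers things
  have hrecov : ∀ g : M, C.mul (C.id y) (C.mul (C.id x) g) = g := fun g => by
    rw [← hC.mul_assoc, hC.id_mul, hyx, hC.one_mul]
  have hrecov' : ∀ g : M, C.mul (C.id x) (C.mul (C.id y) g) = g := fun g => by
    rw [← hC.mul_assoc, hC.id_mul, hxy, hC.one_mul]
  -- mul (id x) f is not an identity
  have hnid : ¬ C.toCatStruct.IsId (C.mul (C.id x) f) := by
    rintro ⟨z, hz⟩
    refine arrow_not_id hP hf ⟨C.objMul y z, ?_⟩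
    rw [← hrecov f, hz, hC.id_mul]
  obtain ⟨l, ⟨hlA, hl⟩, _⟩ := hP.arrow_decomp _ hnid
  -- id y = comp (id y) (id y)
  have hidy : C.comp (C.id y) (C.id y) = C.id y := by
    have := hCat.comp_id (C.id y); rwa [hCat.src_id] at this
  revert hlA
  generalize hF : C.mul (C.id x) f = F at hl ⊢
  cases hl with
  | single => exact fun hlA => hlA _ (by simp)
  | @cons a l' g hrest hc =>
      intro hlA
      exfalso
      have haA : a ∈ A := hlA a (by simp)
      set p := C.mul (C.id y) a with hp
      set q := C.mul (C.id y) g with hq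
      have key : f = C.toCatStruct.comp p q := by
        have h1 : C.mul (C.id y) (C.toCatStruct.comp a g) = C.toCatStruct.comp p q := by
          conv_lhs => rw [← hidy]
          exact hC.interchange _ _ _ _ (by rw [hCat.src_id, hCat.tgt_id]) hc
        rw [← h1, ← hF, hrecov f]
      have hpnid : ¬ C.toCatStruct.IsId p := by
        rintro ⟨z, hz⟩
        refine arrow_not_id hP haA ⟨C.objMul x z, ?_⟩
        rw [← hrecov' a, ← hp, hz, hC.id_mul]
      have hqnid : ¬ C.toCatStruct.IsId q := by
        rintro ⟨z, hz⟩
        refine hP.id_no_decomp g ⟨C.objMul x z, ?_⟩ ⟨l', fun b hb => hlA b (by simp [hb]), hrest⟩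
        rw [← hrecov' g, ← hq, hz, hC.id_mul]
      have hst : C.src p = C.tgt q := by
        rw [hp, hq, hC.src_mul, hC.tgt_mul, hCat.src_id, hCat.tgt_id, hc]
      obtain ⟨lp, ⟨hlpA, hlp⟩, _⟩ := hP.arrow_decomp p hpnid
      obtain ⟨lq, ⟨hlqA, hlq⟩, _⟩ := hP.arrow_decomp q hqnid
      have happ := composesTo_append hCat hlp hlq hst
      rw [← key] at happ
      have heq := decomp_eq_single hP hf (fun b hb => by
        rcases List.mem_append.mp hb with h | h
        · exact hlpA b h
        · exact hlqA b h) happ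
      have h1 : 1 ≤ lp.length := List.length_pos_iff.mpr (composesTo_ne_nil hlp)
      have h2 : 1 ≤ lq.length := List.length_pos_iff.mpr (composesTo_ne_nil hlq)
      have := congrArg List.length heq
      simp [List.length_append] at this
      omega

private lemma right_closed {O M : Type}
    (C : MonCatStruct O M) (hC : C.IsMonCat) (A : Set M)
    (hP : IsPathCat C.toCatStruct A) (hG : C.ObjGroup) (x : O) (f : M) (hf : f ∈ A) :
    C.mul f (C.id x) ∈ A := by
  have hCat := hC.toIsCat
  obtain ⟨y, hxy, hyx⟩ := hG x
  have hrecov : ∀ g : M, C.mul (C.mul g (C.id x)) (C.id y) = g := fun g => by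
    rw [hC.mul_assoc, hC.id_mul, hxy, hC.mul_one]
  have hrecov' : ∀ g : M, C.mul (C.mul g (C.id y)) (C.id x) = g := fun g => by
    rw [hC.mul_assoc, hC.id_mul, hyx, hC.mul_one]
  have hnid : ¬ C.toCatStruct.IsId (C.mul f (C.id x)) := by
    rintro ⟨z, hz⟩
    refine arrow_not_id hP hf ⟨C.objMul z y, ?_⟩
    rw [← hrecov f, hz, hC.id_mul]
  obtain ⟨l, ⟨hlA, hl⟩, _⟩ := hP.arrow_decomp _ hnid
  have hidy : C.comp (C.id y) (C.id y) = C.id y := by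
    have := hCat.comp_id (C.id y); rwa [hCat.src_id] at this
  revert hlA
  generalize hF : C.mul f (C.id x) = F at hl ⊢
  cases hl with
  | single => exact fun hlA => hlA _ (by simp)
  | @cons a l' g hrest hc =>
      intro hlA
      exfalso
      have haA : a ∈ A := hlA a (by simp)
      set p := C.mul a (C.id y) with hp
      set q := C.mul g (C.id y) with hq
      have key : f = C.toCatStruct.comp p q := by
        have h1 : C.mul (C.toCatStruct.comp a g) (C.id y) = C.toCatStruct.comp p q := by
          conv_lhs => rw [← hidy]
          exact hC.interchange _ _ _ _ hc (by rw [hCat.src_id, hCat.tgt_id])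
        rw [← h1, ← hF, hrecov f]
      have hpnid : ¬ C.toCatStruct.IsId p := by
        rintro ⟨z, hz⟩
        refine arrow_not_id hP haA ⟨C.objMul z x, ?_⟩
        rw [← hrecov' a, ← hp, hz, hC.id_mul]
      have hqnid : ¬ C.toCatStruct.IsId q := by
        rintro ⟨z, hz⟩
        refine hP.id_no_decomp g ⟨C.objMul z x, ?_⟩ ⟨l', fun b hb => hlA b (by simp [hb]), hrest⟩
        rw [← hrecov' g, ← hq, hz, hC.id_mul]
      have hst : C.src p = C.tgt q := by
        rw [hp, hq, hC.src_mul, hC.tgt_mul, hCat.src_id, hCat.tgt_id, hc]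
      obtain ⟨lp, ⟨hlpA, hlp⟩, _⟩ := hP.arrow_decomp p hpnid
      obtain ⟨lq, ⟨hlqA, hlq⟩, _⟩ := hP.arrow_decomp q hqnid
      have happ := composesTo_append hCat hlp hlq hst
      rw [← key] at happ
      have heq := decomp_eq_single hP hf (fun b hb => by
        rcases List.mem_append.mp hb with h | h
        · exact hlpA b h
        · exact hlqA b h) happ
      have h1 : 1 ≤ lp.length := List.length_pos_iff.mpr (composesTo_ne_nil hlp)
      have h2 : 1 ≤ lq.length := List.length_pos_iff.mpr (composesTo_ne_nil hlq)
      have := congrArg List.length heq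
      simp [List.length_append] at this
      omega

/-- If the path category of a quiver is strict monoidal with
the vertices forming a group, then `i_a · f` and `f · i_a` are again arrows
for every vertex `a` and arrow `f`; consequently the monoidal product defines
commuting left and right `Q₀`-actions on the arrow set `Q₁ = A`. -/
theorem pathCat_arrows_closed_under_id_mul {O M : Type}
    (C : MonCatStruct O M) (hC : C.IsMonCat) (A : Set M)
    (hP : IsPathCat C.toCatStruct A) (hG : C.ObjGroup) :
    (∀ x : O, ∀ f ∈ A, C.mul (C.id x) f ∈ A ∧ C.mul f (C.id x) ∈ A) ∧
    -- left action
    (∀ f : M, C.mul (C.id C.one) f = f) ∧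
    (∀ (x y : O) (f : M),
      C.mul (C.id x) (C.mul (C.id y) f) = C.mul (C.id (C.objMul x y)) f) ∧
    -- right action
    (∀ f : M, C.mul f (C.id C.one) = f) ∧
    (∀ (x y : O) (f : M),
      C.mul (C.mul f (C.id x)) (C.id y) = C.mul f (C.id (C.objMul x y))) ∧
    -- the two actions commute
    (∀ (x y : O) (f : M),
      C.mul (C.id x) (C.mul f (C.id y)) = C.mul (C.mul (C.id x) f) (C.id y)) := by
  refine ⟨fun x f hf => ⟨left_closed C hC A hP hG x f hf, right_closed C hC A hP hG x f hf⟩,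
    hC.one_mul, fun x y f => by rw [← hC.mul_assoc, hC.id_mul],
    hC.mul_one, fun x y f => by rw [hC.mul_assoc, hC.id_mul],
    fun x y f => (hC.mul_assoc _ _ _).symm⟩
end

section
/- Assume the path category C_Q of a quiver Q has a strict monoidal structure making Q_0 a group, and Q_1 is nonempty. Then there exists a central element z of the group Q_0 such that Q_1 contains, for each vertex a, exactly one arrow f_a : a → z·a, and these are all the arrows. -/
open scoped Classical TensorProduct

namespace PathCatAux

open CatStruct MonCatStruct

variable {O M : Type}

lemma composesTo_ne_nil {C : CatStruct O M} {l : List M} {f : M}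
    (h : C.ComposesTo l f) : l ≠ [] := by
  cases h <;> simp

lemma composesTo_singleton {C : CatStruct O M} {b f : M}
    (h : C.ComposesTo [b] f) : f = b := by
  cases h with
  | single => rfl
  | cons a h' hc => cases h'

lemma composesTo_append {C : CatStruct O M} (hcat : C.IsCat)
    {l1 l2 : List M} {f g : M} (h1 : C.ComposesTo l1 f) (h2 : C.ComposesTo l2 g) :
    C.src f = C.tgt g → C.ComposesTo (l1 ++ l2) (C.comp f g) := by
  induction h1 with
  | single f =>
    intro hfg
    exact ComposesTo.cons f h2 hfg
  | cons a h hc ih =>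
    rename_i l f'
    intro hfg
    have hs : C.src f' = C.tgt g := by
      rwa [hcat.src_comp a _ hc] at hfg
    have := ih hs
    rw [hcat.assoc a f' g hc hs]
    exact ComposesTo.cons a this (by rw [hcat.tgt_comp f' g hs]; exact hc)

section PathCat

variable {C : MonCatStruct O M} {A : Set M}

lemma arrow_not_isId (hP : IsPathCat C.toCatStruct A) {f : M} (hf : f ∈ A) :
    ¬ C.toCatStruct.IsId f := fun hid =>
  hP.id_no_decomp f hid ⟨[f], by simpa using hf, ComposesTo.single f⟩

lemma arrow_decomp_eq (hP : IsPathCat C.toCatStruct A) {f : M} (hf : f ∈ A)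
    {l : List M} (hl : ∀ a ∈ l, a ∈ A) (hc : C.toCatStruct.ComposesTo l f) :
    l = [f] := by
  obtain ⟨l₀, _, hun⟩ := hP.arrow_decomp f (arrow_not_isId hP hf)
  rw [hun l ⟨hl, hc⟩, hun [f] ⟨by simpa using hf, ComposesTo.single f⟩]

lemma arrow_iff (hM : C.IsMonCat) (hP : IsPathCat C.toCatStruct A) (f : M) :
    f ∈ A ↔ (¬ C.toCatStruct.IsId f ∧ ∀ a b, C.src a = C.tgt b →
      C.comp a b = f → C.toCatStruct.IsId a ∨ C.toCatStruct.IsId b) := by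
  constructor
  · intro hf
    refine ⟨arrow_not_isId hP hf, ?_⟩
    intro a b hab hcomp
    by_contra hcon
    push_neg at hcon
    obtain ⟨ha, hb⟩ := hcon
    obtain ⟨la, ⟨hlaA, hlac⟩, _⟩ := hP.arrow_decomp a ha
    obtain ⟨lb, ⟨hlbA, hlbc⟩, _⟩ := hP.arrow_decomp b hb
    have hcc : C.toCatStruct.ComposesTo (la ++ lb) f := by
      rw [← hcomp]; exact composesTo_append hM.toIsCat hlac hlbc hab
    have hmem : ∀ x ∈ la ++ lb, x ∈ A := by
      intro x hx
      rcases List.mem_append.mp hx with h | h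
      exacts [hlaA x h, hlbA x h]
    have heq := arrow_decomp_eq hP hf hmem hcc
    have h1 := composesTo_ne_nil hlac
    have h2 := composesTo_ne_nil hlbc
    rcases la with _ | ⟨a0, la'⟩
    · exact h1 rfl
    rcases lb with _ | ⟨b0, lb'⟩
    · exact h2 rfl
    have hlen := congrArg List.length heq
    simp [List.length_append] at hlen
  · rintro ⟨hnid, hirr⟩
    obtain ⟨l, ⟨hlA, hlc⟩, -⟩ := hP.arrow_decomp f hnid
    rcases l with _ | ⟨a0, l'⟩
    · exact absurd rfl (composesTo_ne_nil hlc)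
    rcases l' with _ | ⟨a1, l''⟩
    · have := composesTo_singleton hlc
      rw [this]; exact hlA a0 (by simp)
    · -- f = comp a0 g with both non-identities: contradiction
      exfalso
      cases hlc
      rename_i g hc h
      have hga : ¬ C.toCatStruct.IsId a0 :=
        arrow_not_isId hP (hlA a0 (by simp))
      have hgg : ¬ C.toCatStruct.IsId g := fun hid =>
        hP.id_no_decomp g hid ⟨a1 :: l'', fun x hx => hlA x (by simp [hx]), h⟩
      rcases hirr a0 g hc rfl with h' | h'
      exacts [hga h', hgg h']

/-- Right multiplication by an identity preserves the arrow set. -/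
lemma mulId_mem (hM : C.IsMonCat) (hP : IsPathCat C.toCatStruct A)
    {u u' : O} (hu : C.objMul u u' = C.one) (hu' : C.objMul u' u = C.one)
    {f : M} (hf : f ∈ A) : C.mul f (C.id u) ∈ A := by
  have hcat := hM.toIsCat
  have hTT' : ∀ g : M, C.mul (C.mul g (C.id u)) (C.id u') = g := by
    intro g
    rw [hM.mul_assoc, hM.id_mul, hu, hM.mul_one]
  have hT'T : ∀ g : M, C.mul (C.mul g (C.id u')) (C.id u) = g := by
    intro g
    rw [hM.mul_assoc, hM.id_mul, hu', hM.mul_one]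
  rw [arrow_iff hM hP]
  constructor
  · rintro ⟨w, hw⟩
    apply arrow_not_isId hP hf
    refine ⟨C.objMul w u', ?_⟩
    rw [← hTT' f, hw, hM.id_mul]
  · intro a b hab hcomp
    by_contra hcon
    push_neg at hcon
    obtain ⟨ha, hb⟩ := hcon
    have hidcomp : C.comp (C.id u') (C.id u') = C.id u' := by
      have := hcat.comp_id (C.id u')
      rwa [hcat.src_id] at this
    have hfeq : f = C.comp (C.mul a (C.id u')) (C.mul b (C.id u')) := by
      have h1 : f = C.mul (C.comp a b) (C.id u') := by rw [hcomp, hTT']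
      have h2 := hM.interchange a b (C.id u') (C.id u') hab
        (by rw [hcat.src_id, hcat.tgt_id])
      rw [hidcomp] at h2
      rw [h1, h2]
    have hab' : C.src (C.mul a (C.id u')) = C.tgt (C.mul b (C.id u')) := by
      rw [hM.src_mul, hM.tgt_mul, hcat.src_id, hcat.tgt_id, hab]
    rcases (arrow_iff hM hP f).mp hf |>.2 _ _ hab' hfeq.symm with h | h
    · obtain ⟨w, hw⟩ := h
      apply ha
      refine ⟨C.objMul w u, ?_⟩
      rw [← hT'T a, hw, hM.id_mul]
    · obtain ⟨w, hw⟩ := h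
      apply hb
      refine ⟨C.objMul w u, ?_⟩
      rw [← hT'T b, hw, hM.id_mul]

/-- Left multiplication by an identity preserves the arrow set. -/
lemma idMul_mem (hM : C.IsMonCat) (hP : IsPathCat C.toCatStruct A)
    {u u' : O} (hu : C.objMul u u' = C.one) (hu' : C.objMul u' u = C.one)
    {f : M} (hf : f ∈ A) : C.mul (C.id u) f ∈ A := by
  have hcat := hM.toIsCat
  have hTT' : ∀ g : M, C.mul (C.id u') (C.mul (C.id u) g) = g := by
    intro g
    rw [← hM.mul_assoc, hM.id_mul, hu', hM.one_mul]
  have hT'T : ∀ g : M, C.mul (C.id u) (C.mul (C.id u') g) = g := by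
    intro g
    rw [← hM.mul_assoc, hM.id_mul, hu, hM.one_mul]
  rw [arrow_iff hM hP]
  constructor
  · rintro ⟨w, hw⟩
    apply arrow_not_isId hP hf
    refine ⟨C.objMul u' w, ?_⟩
    rw [← hTT' f, hw, hM.id_mul]
  · intro a b hab hcomp
    by_contra hcon
    push_neg at hcon
    obtain ⟨ha, hb⟩ := hcon
    have hidcomp : C.comp (C.id u') (C.id u') = C.id u' := by
      have := hcat.comp_id (C.id u')
      rwa [hcat.src_id] at this
    have hfeq : f = C.comp (C.mul (C.id u') a) (C.mul (C.id u') b) := by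
      have h1 : f = C.mul (C.id u') (C.comp a b) := by rw [hcomp, hTT']
      have h2 := hM.interchange (C.id u') (C.id u') a b
        (by rw [hcat.src_id, hcat.tgt_id]) hab
      rw [hidcomp] at h2
      rw [h1, h2]
    have hab' : C.src (C.mul (C.id u') a) = C.tgt (C.mul (C.id u') b) := by
      rw [hM.src_mul, hM.tgt_mul, hcat.src_id, hcat.tgt_id, hab]
    rcases (arrow_iff hM hP f).mp hf |>.2 _ _ hab' hfeq.symm with h | h
    · obtain ⟨w, hw⟩ := h
      apply ha
      refine ⟨C.objMul u w, ?_⟩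
      rw [← hT'T a, hw, hM.id_mul]
    · obtain ⟨w, hw⟩ := h
      apply hb
      refine ⟨C.objMul u w, ?_⟩
      rw [← hT'T b, hw, hM.id_mul]

/-- Key swap lemma: any two arrows `f, g` satisfy
`f ⊗ id(tgt g) = id(tgt f) ⊗ g` and `id(src f) ⊗ g = f ⊗ id(src g)`. -/
lemma swap (hM : C.IsMonCat) (hP : IsPathCat C.toCatStruct A) (hG : C.ObjGroup)
    {f g : M} (hf : f ∈ A) (hg : g ∈ A) :
    C.mul f (C.id (C.tgt g)) = C.mul (C.id (C.tgt f)) g ∧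
    C.mul (C.id (C.src f)) g = C.mul f (C.id (C.src g)) := by
  have hcat := hM.toIsCat
  set e1 := C.mul f (C.id (C.tgt g)) with he1
  set e2 := C.mul (C.id (C.src f)) g with he2
  set e3 := C.mul (C.id (C.tgt f)) g with he3
  set e4 := C.mul f (C.id (C.src g)) with he4
  have eq1 : C.comp e1 e2 = C.mul f g := by
    rw [he1, he2, ← hM.interchange f (C.id (C.src f)) (C.id (C.tgt g)) g
      (by rw [hcat.tgt_id]) (by rw [hcat.src_id]),
      hcat.comp_id, hcat.id_comp]
  have eq2 : C.comp e3 e4 = C.mul f g := by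
    rw [he3, he4, ← hM.interchange (C.id (C.tgt f)) f g (C.id (C.src g))
      (by rw [hcat.src_id]) (by rw [hcat.tgt_id]),
      hcat.id_comp, hcat.comp_id]
  have hc1 : C.src e1 = C.tgt e2 := by
    rw [he1, he2, hM.src_mul, hM.tgt_mul, hcat.src_id, hcat.tgt_id]
  have hc2 : C.src e3 = C.tgt e4 := by
    rw [he3, he4, hM.src_mul, hM.tgt_mul, hcat.src_id, hcat.tgt_id]
  have hd1 : C.toCatStruct.ComposesTo [e1, e2] (C.mul f g) := by
    rw [← eq1]; exact ComposesTo.cons e1 (ComposesTo.single e2) hc1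
  have hd2 : C.toCatStruct.ComposesTo [e3, e4] (C.mul f g) := by
    rw [← eq2]; exact ComposesTo.cons e3 (ComposesTo.single e4) hc2
  obtain ⟨tg', htg1, htg2⟩ := hG (C.tgt g)
  obtain ⟨sf', hsf1, hsf2⟩ := hG (C.src f)
  obtain ⟨tf', htf1, htf2⟩ := hG (C.tgt f)
  obtain ⟨sg', hsg1, hsg2⟩ := hG (C.src g)
  have hm1 : ∀ x ∈ [e1, e2], x ∈ A := by
    intro x hx
    simp at hx
    rcases hx with rfl | rfl
    exacts [mulId_mem hM hP htg1 htg2 hf, idMul_mem hM hP hsf1 hsf2 hg]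
  have hm2 : ∀ x ∈ [e3, e4], x ∈ A := by
    intro x hx
    simp at hx
    rcases hx with rfl | rfl
    exacts [idMul_mem hM hP htf1 htf2 hg, mulId_mem hM hP hsg1 hsg2 hf]
  have hnid : ¬ C.toCatStruct.IsId (C.mul f g) := fun hid =>
    hP.id_no_decomp _ hid ⟨[e1, e2], hm1, hd1⟩
  obtain ⟨l, -, hun⟩ := hP.arrow_decomp _ hnid
  have h12 : ([e1, e2] : List M) = [e3, e4] := by
    rw [hun [e1, e2] ⟨hm1, hd1⟩, hun [e3, e4] ⟨hm2, hd2⟩]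
  simp at h12
  exact ⟨h12.1, h12.2⟩

end PathCat

end PathCatAux

/-- If the path category of a quiver is strict monoidal with
vertex group `Q₀` and the arrow set is nonempty, then there is a central
element `z` of `Q₀` such that for each vertex `a` there is exactly one arrow
`f_a : a → z·a`, and every arrow is of this form. -/
theorem pathCat_arrows_classified {O M : Type}
    (C : MonCatStruct O M) (hC : C.IsMonCat) (A : Set M)
    (hP : IsPathCat C.toCatStruct A) (hG : C.ObjGroup) (hA : A.Nonempty) :
    ∃ z : O, (∀ a : O, C.objMul z a = C.objMul a z) ∧
      (∀ a : O, ∃! f : M, f ∈ A ∧ C.src f = a ∧ C.tgt f = C.objMul z a) ∧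
      (∀ f ∈ A, C.tgt f = C.objMul z (C.src f)) := by
  classical
  obtain ⟨f₀, hf₀⟩ := hA
  have hcat := hC.toIsCat
  obtain ⟨x', hx1, hx2⟩ := hG (C.src f₀)
  -- key exchange fact
  have hK : ∀ g ∈ A, C.objMul (C.src f₀) (C.tgt g) = C.objMul (C.tgt f₀) (C.src g) := by
    intro g hg
    have h := (PathCatAux.swap hC hP hG hf₀ hg).1
    have h2 := congrArg C.src h
    rwa [hC.src_mul, hC.src_mul, hcat.src_id, hcat.src_id] at h2
  -- every arrow has target z · source
  have hT : ∀ g ∈ A, C.tgt g = C.objMul (C.objMul x' (C.tgt f₀)) (C.src g) := by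
    intro g hg
    have h := congrArg (C.objMul x') (hK g hg)
    rwa [← hC.objMul_assoc, ← hC.objMul_assoc, hx2, hC.objOne_mul] at h
  -- for each vertex a there is an arrow a → a·z
  have harr : ∀ a : O, C.mul (C.id (C.objMul a x')) f₀ ∈ A ∧
      C.src (C.mul (C.id (C.objMul a x')) f₀) = a ∧
      C.tgt (C.mul (C.id (C.objMul a x')) f₀) =
        C.objMul a (C.objMul x' (C.tgt f₀)) := by
    intro a
    obtain ⟨a', ha1, ha2⟩ := hG a
    have hu : C.objMul (C.objMul a x') (C.objMul (C.src f₀) a') = C.one := by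
      rw [hC.objMul_assoc, ← hC.objMul_assoc x' (C.src f₀) a', hx2,
        hC.objOne_mul, ha1]
    have hu' : C.objMul (C.objMul (C.src f₀) a') (C.objMul a x') = C.one := by
      rw [hC.objMul_assoc, ← hC.objMul_assoc a' a x', ha2, hC.objOne_mul, hx1]
    refine ⟨PathCatAux.idMul_mem hC hP hu hu' hf₀, ?_, ?_⟩
    · rw [hC.src_mul, hcat.src_id, hC.objMul_assoc, hx2, hC.objMul_one]
    · rw [hC.tgt_mul, hcat.tgt_id, hC.objMul_assoc]
  -- centrality of z
  have hcent : ∀ a : O, C.objMul (C.objMul x' (C.tgt f₀)) a =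
      C.objMul a (C.objMul x' (C.tgt f₀)) := by
    intro a
    have h := (harr a).2.2
    have h2 := hT _ (harr a).1
    rw [(harr a).2.1] at h2
    exact (h.symm.trans h2).symm
  -- any two arrows with the same source coincide
  have huniq : ∀ g ∈ A, ∀ g' ∈ A, C.src g = C.src g' → g = g' := by
    intro g hg g' hg' hsrc
    obtain ⟨a', ha1, ha2⟩ := hG (C.src g)
    have hG1 : C.mul g (C.id a') ∈ A := PathCatAux.mulId_mem hC hP ha2 ha1 hg
    have hG2 : C.mul g' (C.id a') ∈ A := by
      rw [hsrc] at ha1 ha2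
      exact PathCatAux.mulId_mem hC hP ha2 ha1 hg'
    have hs1 : C.src (C.mul g (C.id a')) = C.one := by
      rw [hC.src_mul, hcat.src_id, ha1]
    have hs2 : C.src (C.mul g' (C.id a')) = C.one := by
      rw [hC.src_mul, hcat.src_id, ← hsrc, ha1]
    have h := (PathCatAux.swap hC hP hG hG2 hG1).2
    rw [hs1, hs2, hC.one_mul, hC.mul_one] at h
    calc g = C.mul (C.mul g (C.id a')) (C.id (C.src g)) := by
            rw [hC.mul_assoc, hC.id_mul, ha2, hC.mul_one]
      _ = C.mul (C.mul g' (C.id a')) (C.id (C.src g)) := by rw [h]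
      _ = g' := by rw [hC.mul_assoc, hC.id_mul, ha2, hC.mul_one]
  refine ⟨C.objMul x' (C.tgt f₀), hcent, ?_, hT⟩
  intro a
  refine ⟨C.mul (C.id (C.objMul a x')) f₀, ⟨(harr a).1, (harr a).2.1, ?_⟩, ?_⟩
  · rw [(harr a).2.2, hcent]
  · rintro g ⟨hgA, hgsrc, -⟩
    exact huniq g hgA _ (harr a).1 (by rw [hgsrc, (harr a).2.1])
end

section
/- Let Q be a quiver whose path category C_Q carries a strict monoidal structure making Q_0 a group. The monoidal product functor C_Q × C_Q → C_Q has the ULF property if and only if Q_1 is empty. -/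
open scoped Classical TensorProduct

section Aux

variable {O M : Type}

namespace CatStruct

variable {C : CatStruct O M}

lemma composesTo_ne_nil {l : List M} {f : M} (h : C.ComposesTo l f) : l ≠ [] := by
  cases h <;> simp

lemma comp_eq_right (hC : C.IsCat) {p q : M} (hp : C.IsId p)
    (hpq : C.src p = C.tgt q) : C.comp p q = q := by
  obtain ⟨u, rfl⟩ := hp
  have hu : u = C.tgt q := (hC.src_id u).symm.trans hpq
  rw [hu]; exact hC.id_comp q

lemma comp_eq_left (hC : C.IsCat) {p q : M} (hq : C.IsId q)
    (hpq : C.src p = C.tgt q) : C.comp p q = p := by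
  obtain ⟨v, rfl⟩ := hq
  have hv : v = C.src p := (hC.tgt_id v).symm.trans hpq.symm
  rw [hv]; exact hC.comp_id p

lemma id_tgt_mem_N2 (hC : C.IsCat) (f : M) : (C.id (C.tgt f), f) ∈ C.N2 f :=
  ⟨by rw [hC.src_id], hC.id_comp f⟩

lemma id_src_mem_N2 (hC : C.IsCat) (f : M) : (f, C.id (C.src f)) ∈ C.N2 f :=
  ⟨by rw [hC.tgt_id], hC.comp_id f⟩

lemma composesTo_append (hC : C.IsCat) {lp lq : List M} {p q : M}
    (hp : C.ComposesTo lp p) (hq : C.ComposesTo lq q) (h : C.src p = C.tgt q) :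
    C.ComposesTo (lp ++ lq) (C.comp p q) := by
  induction hp with
  | single f => exact .cons f hq h
  | @cons a l f hf hc ih =>
      have hfq : C.src f = C.tgt q := by
        rw [← hC.src_comp a f hc]; exact h
      have h2 : C.src a = C.tgt (C.comp f q) := by
        rw [hC.tgt_comp f q hfq]; exact hc
      have hres := ComposesTo.cons a (ih hfq) h2
      rwa [← hC.assoc a f q hc hfq] at hres

/-- A morphism is atomic if it is not an identity and its only
2-decompositions are the two trivial ones. -/
def Atomic (C : CatStruct O M) (f : M) : Prop :=
  ¬ C.IsId f ∧ ∀ p q : M, (p, q) ∈ C.N2 f →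
    (p = C.id (C.tgt f) ∧ q = f) ∨ (p = f ∧ q = C.id (C.src f))

end CatStruct

namespace IsPathCat

variable {C : CatStruct O M} {A : Set M}

lemma not_isId_of_mem (hP : IsPathCat C A) {a : M} (ha : a ∈ A) : ¬ C.IsId a :=
  fun h => hP.id_no_decomp a h ⟨[a], by simpa using ha, .single a⟩

lemma arrowList_of_not_isId (hP : IsPathCat C A) {f : M} (hf : ¬ C.IsId f) :
    ∃ l : List M, (∀ a ∈ l, a ∈ A) ∧ C.ComposesTo l f :=
  (hP.arrow_decomp f hf).exists

lemma n2_isId (hC : C.IsCat) (hP : IsPathCat C A) {h : M} (hh : C.IsId h)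
    {p q : M} (hm : (p, q) ∈ C.N2 h) : p = h ∧ q = h := by
  by_cases hp : C.IsId p
  · by_cases hq : C.IsId q
    · have h1 : C.comp p q = q := CatStruct.comp_eq_right hC hp hm.1
      have h2 : C.comp p q = p := CatStruct.comp_eq_left hC hq hm.1
      exact ⟨h2.symm.trans hm.2, h1.symm.trans hm.2⟩
    · have hq' : q = h := (CatStruct.comp_eq_right hC hp hm.1).symm.trans hm.2
      exact absurd (show C.IsId q by rw [hq']; exact hh) hq
  · by_cases hq : C.IsId q
    · have hp' : p = h := (CatStruct.comp_eq_left hC hq hm.1).symm.trans hm.2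
      exact absurd (show C.IsId p by rw [hp']; exact hh) hp
    · exfalso
      obtain ⟨lp, hlpA, hlp⟩ := hP.arrowList_of_not_isId hp
      obtain ⟨lq, hlqA, hlq⟩ := hP.arrowList_of_not_isId hq
      have happ := CatStruct.composesTo_append hC hlp hlq hm.1
      rw [hm.2] at happ
      refine hP.id_no_decomp h hh ⟨lp ++ lq, fun x hx => ?_, happ⟩
      rcases List.mem_append.1 hx with h' | h'
      · exact hlpA x h'
      · exact hlqA x h'

lemma atomic_of_mem (hC : C.IsCat) (hP : IsPathCat C A) {a : M} (ha : a ∈ A) :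
    C.Atomic a := by
  refine ⟨hP.not_isId_of_mem ha, fun p q hm => ?_⟩
  by_cases hp : C.IsId p
  · left
    have hq : q = a := (CatStruct.comp_eq_right hC hp hm.1).symm.trans hm.2
    refine ⟨?_, hq⟩
    obtain ⟨u, rfl⟩ := hp
    have hu : u = C.tgt q := (hC.src_id u).symm.trans hm.1
    rw [hu, hq]
  · by_cases hq : C.IsId q
    · right
      have hpa : p = a := (CatStruct.comp_eq_left hC hq hm.1).symm.trans hm.2
      refine ⟨hpa, ?_⟩
      obtain ⟨v, rfl⟩ := hq
      have hv : v = C.src p := (hC.tgt_id v).symm.trans hm.1.symm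
      rw [hv, hpa]
    · exfalso
      obtain ⟨lp, hlpA, hlp⟩ := hP.arrowList_of_not_isId hp
      obtain ⟨lq, hlqA, hlq⟩ := hP.arrowList_of_not_isId hq
      have happ := CatStruct.composesTo_append hC hlp hlq hm.1
      rw [hm.2] at happ
      obtain ⟨l, -, hu⟩ := hP.arrow_decomp a (hP.not_isId_of_mem ha)
      have e1 : lp ++ lq = l := by
        refine hu _ ⟨fun x hx => ?_, happ⟩
        rcases List.mem_append.1 hx with h' | h'
        · exact hlpA x h'
        · exact hlqA x h'
      have e2 : [a] = l := hu _ ⟨by simpa using ha, .single a⟩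
      have hlen : lp.length + lq.length = 1 := by
        simpa [List.length_append] using congrArg List.length (e1.trans e2.symm)
      have h1 : 0 < lp.length := List.length_pos_iff.2 (CatStruct.composesTo_ne_nil hlp)
      have h2 : 0 < lq.length := List.length_pos_iff.2 (CatStruct.composesTo_ne_nil hlq)
      omega

lemma mem_of_atomic (hC : C.IsCat) (hP : IsPathCat C A) {f : M}
    (hf : C.Atomic f) : f ∈ A := by
  obtain ⟨l, ⟨hlA, hlc⟩, -⟩ := hP.arrow_decomp f hf.1
  cases hlc with
  | single => exact hlA f (by simp)
  | @cons a l' g h hc =>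
      rcases hf.2 a g ⟨hc, rfl⟩ with ⟨h1, -⟩ | ⟨-, h2⟩
      · exact absurd ⟨_, h1⟩ (hP.not_isId_of_mem (hlA a (by simp)))
      · exact absurd ⟨l', fun x hx => hlA x (by simp [hx]), h⟩
          (hP.id_no_decomp g ⟨_, h2⟩)

end IsPathCat

namespace MonCatStruct

variable {C : MonCatStruct O M} {A : Set M}

lemma id_mem_N2_id (hC : C.IsMonCat) (x : O) :
    (C.id x, C.id x) ∈ C.toCatStruct.N2 (C.id x) := by
  have hcat := hC.toIsCat
  refine ⟨by rw [hcat.src_id, hcat.tgt_id], ?_⟩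
  exact CatStruct.comp_eq_right hcat ⟨x, rfl⟩ (by rw [hcat.src_id, hcat.tgt_id])

lemma atomic_mul_id_left (hC : C.IsMonCat) (hP : IsPathCat C.toCatStruct A)
    (hULF : C.MulULF) {a : M} (ha : C.toCatStruct.Atomic a) (x : O) :
    C.toCatStruct.Atomic (C.mul (C.id x) a) := by
  have hcat := hC.toIsCat
  have hx : C.toCatStruct.IsId (C.id x) := ⟨x, rfl⟩
  have hBij := hULF (C.id x) a
  have hu1 : ((C.id x, C.id x), (C.id (C.tgt a), a)) ∈
      (C.toCatStruct.N2 (C.id x)) ×ˢ (C.toCatStruct.N2 a) :=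
    ⟨id_mem_N2_id hC x, CatStruct.id_tgt_mem_N2 hcat a⟩
  have hu2 : ((C.id x, C.id x), (a, C.id (C.src a))) ∈
      (C.toCatStruct.N2 (C.id x)) ×ˢ (C.toCatStruct.N2 a) :=
    ⟨id_mem_N2_id hC x, CatStruct.id_src_mem_N2 hcat a⟩
  have hne : ((C.id x, C.id x), (C.id (C.tgt a), a)) ≠
      ((C.id x, C.id x), (a, C.id (C.src a))) := by
    intro h
    exact ha.1 ⟨_, (congrArg (fun z => z.2.1) h).symm⟩
  have hnotId : ¬ C.toCatStruct.IsId (C.mul (C.id x) a) := by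
    intro hid
    apply hne
    apply hBij.2.1 hu1 hu2
    have e1 := hP.n2_isId hcat hid (hBij.1 hu1)
    have e2 := hP.n2_isId hcat hid (hBij.1 hu2)
    exact Prod.ext (e1.1.trans e2.1.symm) (e1.2.trans e2.2.symm)
  refine ⟨hnotId, fun p q hpq => ?_⟩
  obtain ⟨⟨⟨r, u⟩, ⟨s, v⟩⟩, ⟨hru, hsv⟩, hF⟩ := hBij.2.2 hpq
  have hF1 : C.mul r s = p := congrArg Prod.fst hF
  have hF2 : C.mul u v = q := congrArg Prod.snd hF
  obtain ⟨hr, hu⟩ := hP.n2_isId hcat hx hru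
  rcases ha.2 s v hsv with ⟨hs, hv⟩ | ⟨hs, hv⟩
  · left
    constructor
    · rw [← hF1, hr, hs, hC.id_mul, hC.tgt_mul, hcat.tgt_id]
    · rw [← hF2, hu, hv]
  · right
    constructor
    · rw [← hF1, hr, hs]
    · rw [← hF2, hu, hv, hC.id_mul, hC.src_mul, hcat.src_id]

lemma atomic_mul_id_right (hC : C.IsMonCat) (hP : IsPathCat C.toCatStruct A)
    (hULF : C.MulULF) {a : M} (ha : C.toCatStruct.Atomic a) (x : O) :
    C.toCatStruct.Atomic (C.mul a (C.id x)) := by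
  have hcat := hC.toIsCat
  have hx : C.toCatStruct.IsId (C.id x) := ⟨x, rfl⟩
  have hBij := hULF a (C.id x)
  have hu1 : ((C.id (C.tgt a), a), (C.id x, C.id x)) ∈
      (C.toCatStruct.N2 a) ×ˢ (C.toCatStruct.N2 (C.id x)) :=
    ⟨CatStruct.id_tgt_mem_N2 hcat a, id_mem_N2_id hC x⟩
  have hu2 : ((a, C.id (C.src a)), (C.id x, C.id x)) ∈
      (C.toCatStruct.N2 a) ×ˢ (C.toCatStruct.N2 (C.id x)) :=
    ⟨CatStruct.id_src_mem_N2 hcat a, id_mem_N2_id hC x⟩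
  have hne : ((C.id (C.tgt a), a), (C.id x, C.id x)) ≠
      ((a, C.id (C.src a)), (C.id x, C.id x)) := by
    intro h
    exact ha.1 ⟨_, (congrArg (fun z => z.1.1) h).symm⟩
  have hnotId : ¬ C.toCatStruct.IsId (C.mul a (C.id x)) := by
    intro hid
    apply hne
    apply hBij.2.1 hu1 hu2
    have e1 := hP.n2_isId hcat hid (hBij.1 hu1)
    have e2 := hP.n2_isId hcat hid (hBij.1 hu2)
    exact Prod.ext (e1.1.trans e2.1.symm) (e1.2.trans e2.2.symm)
  refine ⟨hnotId, fun p q hpq => ?_⟩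
  obtain ⟨⟨⟨s, v⟩, ⟨r, u⟩⟩, ⟨hsv, hru⟩, hF⟩ := hBij.2.2 hpq
  have hF1 : C.mul s r = p := congrArg Prod.fst hF
  have hF2 : C.mul v u = q := congrArg Prod.snd hF
  obtain ⟨hr, hu⟩ := hP.n2_isId hcat hx hru
  rcases ha.2 s v hsv with ⟨hs, hv⟩ | ⟨hs, hv⟩
  · left
    constructor
    · rw [← hF1, hr, hs, hC.id_mul, hC.tgt_mul, hcat.tgt_id]
    · rw [← hF2, hu, hv]
  · right
    constructor
    · rw [← hF1, hr, hs]
    · rw [← hF2, hu, hv, hC.id_mul, hC.src_mul, hcat.src_id]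

end MonCatStruct

end Aux

/-- For the path category of a quiver with a strict monoidal
structure making the vertices a group, the monoidal product is ULF iff the
quiver has no arrows. -/
theorem pathCat_mulULF_iff_no_arrows {O M : Type}
    (C : MonCatStruct O M) (hC : C.IsMonCat) (A : Set M)
    (hP : IsPathCat C.toCatStruct A) (hG : C.ObjGroup) :
    C.MulULF ↔ A = ∅ := by
  have hcat := hC.toIsCat
  constructor
  · intro hULF
    ext a
    simp only [Set.mem_empty_iff_false, iff_false]
    intro ha
    have haAt := hP.atomic_of_mem hcat ha
    have hb := hP.mem_of_atomic hcat
      (MonCatStruct.atomic_mul_id_left hC hP hULF haAt (C.tgt a))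
    have hc := hP.mem_of_atomic hcat
      (MonCatStruct.atomic_mul_id_right hC hP hULF haAt (C.src a))
    have hb' := hP.mem_of_atomic hcat
      (MonCatStruct.atomic_mul_id_right hC hP hULF haAt (C.tgt a))
    have hc' := hP.mem_of_atomic hcat
      (MonCatStruct.atomic_mul_id_left hC hP hULF haAt (C.src a))
    have hsrc_ta : C.src (C.id (C.tgt a)) = C.tgt a := hcat.src_id _
    have htgt_sa : C.src a = C.tgt (C.id (C.src a)) := (hcat.tgt_id (C.src a)).symm
    have hI1 : C.mul a a =
        C.comp (C.mul (C.id (C.tgt a)) a) (C.mul a (C.id (C.src a))) := by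
      have h := hC.interchange (C.id (C.tgt a)) a a (C.id (C.src a)) hsrc_ta htgt_sa
      rwa [hcat.id_comp, hcat.comp_id] at h
    have hI2 : C.mul a a =
        C.comp (C.mul a (C.id (C.tgt a))) (C.mul (C.id (C.src a)) a) := by
      have h := hC.interchange a (C.id (C.src a)) (C.id (C.tgt a)) a htgt_sa hsrc_ta
      rwa [hcat.id_comp, hcat.comp_id] at h
    have hcbc : C.src (C.mul (C.id (C.tgt a)) a) = C.tgt (C.mul a (C.id (C.src a))) := by
      rw [hC.src_mul, hC.tgt_mul, hcat.src_id, hcat.tgt_id]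
    have hcbc' : C.src (C.mul a (C.id (C.tgt a))) = C.tgt (C.mul (C.id (C.src a)) a) := by
      rw [hC.src_mul, hC.tgt_mul, hcat.src_id, hcat.tgt_id]
    have hdec1 : C.toCatStruct.ComposesTo
        [C.mul (C.id (C.tgt a)) a, C.mul a (C.id (C.src a))] (C.mul a a) := by
      rw [hI1]; exact .cons _ (.single _) hcbc
    have hdec2 : C.toCatStruct.ComposesTo
        [C.mul a (C.id (C.tgt a)), C.mul (C.id (C.src a)) a] (C.mul a a) := by
      rw [hI2]; exact .cons _ (.single _) hcbc'
    have hmemA1 : ∀ x ∈ [C.mul (C.id (C.tgt a)) a, C.mul a (C.id (C.src a))], x ∈ A := by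
      intro x hx
      rcases List.mem_cons.1 hx with rfl | hx
      · exact hb
      · rcases List.mem_cons.1 hx with rfl | hx
        · exact hc
        · simp at hx
    have hmemA2 : ∀ x ∈ [C.mul a (C.id (C.tgt a)), C.mul (C.id (C.src a)) a], x ∈ A := by
      intro x hx
      rcases List.mem_cons.1 hx with rfl | hx
      · exact hb'
      · rcases List.mem_cons.1 hx with rfl | hx
        · exact hc'
        · simp at hx
    have hnid : ¬ C.toCatStruct.IsId (C.mul a a) := fun h =>
      hP.id_no_decomp _ h ⟨_, hmemA1, hdec1⟩
    obtain ⟨l, -, hu⟩ := hP.arrow_decomp (C.mul a a) hnid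
    have e1 := hu _ ⟨hmemA1, hdec1⟩
    have e2 := hu _ ⟨hmemA2, hdec2⟩
    have e := e1.trans e2.symm
    have ebc : C.mul (C.id (C.tgt a)) a = C.mul a (C.id (C.tgt a)) ∧
        C.mul a (C.id (C.src a)) = C.mul (C.id (C.src a)) a := by
      simpa using e
    have hP2 : ((C.id (C.tgt a), a), (a, C.id (C.src a))) ∈
        (C.toCatStruct.N2 a) ×ˢ (C.toCatStruct.N2 a) :=
      ⟨CatStruct.id_tgt_mem_N2 hcat a, CatStruct.id_src_mem_N2 hcat a⟩
    have hP3 : ((a, C.id (C.src a)), (C.id (C.tgt a), a)) ∈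
        (C.toCatStruct.N2 a) ×ˢ (C.toCatStruct.N2 a) :=
      ⟨CatStruct.id_src_mem_N2 hcat a, CatStruct.id_tgt_mem_N2 hcat a⟩
    have heq := (hULF a a).2.1 hP2 hP3 (by
      show (C.mul (C.id (C.tgt a)) a, C.mul a (C.id (C.src a))) =
        (C.mul a (C.id (C.tgt a)), C.mul (C.id (C.src a)) a)
      rw [ebc.1, ebc.2])
    have hida : C.id (C.tgt a) = a := congrArg (fun z => z.1.1) heq
    exact hP.not_isId_of_mem ha ⟨_, hida.symm⟩
  · intro hA
    subst hA
    have hall : ∀ f : M, ∃ x, f = C.id x := by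
      intro f
      by_contra hf
      obtain ⟨l, hlA, hlc⟩ := hP.arrowList_of_not_isId hf
      rcases l with _ | ⟨x, l⟩
      · exact CatStruct.composesTo_ne_nil hlc rfl
      · exact absurd (hlA x (by simp)) (Set.notMem_empty x)
    intro f g
    obtain ⟨x, rfl⟩ := hall f
    obtain ⟨y, rfl⟩ := hall g
    have hn2 : ∀ z : O, C.toCatStruct.N2 (C.id z) = {(C.id z, C.id z)} := by
      intro z
      ext ⟨p, q⟩
      simp only [Set.mem_singleton_iff, Prod.mk.injEq]
      constructor
      · intro h
        exact hP.n2_isId hcat ⟨z, rfl⟩ h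
      · rintro ⟨rfl, rfl⟩
        exact MonCatStruct.id_mem_N2_id hC z
    rw [hC.id_mul x y, hn2, hn2, hn2, Set.singleton_prod_singleton,
      Set.bijOn_singleton]
    exact Prod.ext (hC.id_mul x y) (hC.id_mul x y)
end

section
/- Let (C, ·, 1) be a locally finite strict 2-group with source subgroup S. Then the monoidal product has the |S|-to-one lifting of factorisations property: for all morphisms f, g, the map N_2(f) × N_2(g) → N_2(f·g), ((a,b),(c,d)) ↦ (a·c, b·d), is a |S|-to-one surjection. -/
open scoped Classical TensorProduct

namespace SLFAux

open MonCatStruct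

variable {O M : Type} (C : MonCatStruct O M) (h2 : C.TwoGroup)

include h2

/-- The chosen compositional inverse of a morphism. -/
noncomputable def cinv (fm : M) : M := Classical.choose (h2.2.1 fm)

lemma cinv_spec (fm : M) :
    C.src (cinv C h2 fm) = C.tgt fm ∧ C.tgt (cinv C h2 fm) = C.src fm ∧
    C.comp fm (cinv C h2 fm) = C.id (C.tgt fm) ∧
    C.comp (cinv C h2 fm) fm = C.id (C.src fm) :=
  Classical.choose_spec (h2.2.1 fm)

/-- The chosen monoidal inverse of an object. -/
noncomputable def objInv (x : O) : O := Classical.choose (h2.2.2 x)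

lemma objInv_spec (x : O) :
    C.objMul x (objInv C h2 x) = C.one ∧ C.objMul (objInv C h2 x) x = C.one :=
  Classical.choose_spec (h2.2.2 x)

/-- Eckmann–Hilton style lemma: when `src a = 1` and `tgt b = 1`,
the monoidal product agrees with composition. -/
lemma mul_eq_comp {a b : M} (ha : C.src a = C.one) (hb : C.tgt b = C.one) :
    C.mul a b = C.comp a b := by
  have hcat := h2.1.toIsCat
  have h1 : C.src a = C.tgt (C.id C.one) := by rw [ha, hcat.tgt_id]
  have h2' : C.src (C.id C.one) = C.tgt b := by rw [hcat.src_id, hb]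
  have hint := h2.1.interchange a (C.id C.one) (C.id C.one) b h1 h2'
  have e1 : C.comp a (C.id C.one) = a := by rw [← ha]; exact hcat.comp_id a
  have e2 : C.comp (C.id C.one) b = b := by rw [← hb]; exact hcat.id_comp b
  rw [e1, e2, h2.1.mul_one, h2.1.one_mul] at hint
  exact hint

lemma exists_right_inv (b : M) : ∃ q, C.mul b q = C.id C.one := by
  have hmc := h2.1
  have hcat := hmc.toIsCat
  have hss : C.src (C.mul b (C.id (objInv C h2 (C.src b)))) = C.one := by
    rw [hmc.src_mul, hcat.src_id]; exact (objInv_spec C h2 (C.src b)).1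
  set s := C.mul b (C.id (objInv C h2 (C.src b))) with hsdef
  have hσ := cinv_spec C h2 s
  have h1 : C.mul s (cinv C h2 s) = C.id (C.tgt s) := by
    rw [mul_eq_comp C h2 hss (by rw [hσ.2.1, hss])]
    exact hσ.2.2.1
  refine ⟨C.mul (C.id (objInv C h2 (C.src b)))
    (C.mul (cinv C h2 s) (C.id (objInv C h2 (C.tgt s)))), ?_⟩
  rw [← hmc.mul_assoc, ← hsdef, ← hmc.mul_assoc, h1, hmc.id_mul,
    (objInv_spec C h2 (C.tgt s)).1]

lemma exists_inv (b : M) :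
    ∃ q, C.mul b q = C.id C.one ∧ C.mul q b = C.id C.one := by
  obtain ⟨q, hq⟩ := exists_right_inv C h2 b
  obtain ⟨r, hr⟩ := exists_right_inv C h2 q
  have hmc := h2.1
  have hqb : C.mul q b = C.id C.one := by
    have h : C.mul q b = C.mul (C.mul q b) (C.mul q r) := by
      rw [hr, hmc.mul_one]
    rw [h, hmc.mul_assoc, ← hmc.mul_assoc b q r, hq, hmc.one_mul, hr]
  exact ⟨q, hq, hqb⟩

/-- The chosen monoidal inverse of a morphism. -/
noncomputable def minv (bm : M) : M := Classical.choose (exists_inv C h2 bm)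

lemma mul_minv (bm : M) : C.mul bm (minv C h2 bm) = C.id C.one :=
  (Classical.choose_spec (exists_inv C h2 bm)).1

lemma minv_mul (bm : M) : C.mul (minv C h2 bm) bm = C.id C.one :=
  (Classical.choose_spec (exists_inv C h2 bm)).2

lemma src_minv (bm : M) :
    C.objMul (C.src bm) (C.src (minv C h2 bm)) = C.one ∧
    C.objMul (C.src (minv C h2 bm)) (C.src bm) = C.one := by
  constructor
  · rw [← h2.1.src_mul, mul_minv, h2.1.toIsCat.src_id]
  · rw [← h2.1.src_mul, minv_mul, h2.1.toIsCat.src_id]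

/-- The section of the factorisation-lifting map, parametrised by `s ∈ S`. -/
noncomputable def psi (f g v s : M) : (M × M) × (M × M) :=
  ((C.comp f (cinv C h2 (C.mul s (C.id (C.src f)))), C.mul s (C.id (C.src f))),
   (C.comp g (cinv C h2 (C.mul (minv C h2 (C.mul s (C.id (C.src f)))) v)),
    C.mul (minv C h2 (C.mul s (C.id (C.src f)))) v))

lemma core {f g u v s : M} (a b c d : M)
    (hu : C.src u = C.tgt v) (huv : C.comp u v = C.mul f g)
    (hs : C.src s = C.one)
    (hb : b = C.mul s (C.id (C.src f)))
    (ha : a = C.comp f (cinv C h2 b))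
    (hd : d = C.mul (minv C h2 b) v)
    (hc : c = C.comp g (cinv C h2 d)) :
    (C.src a = C.tgt b ∧ C.comp a b = f) ∧
    (C.src c = C.tgt d ∧ C.comp c d = g) ∧
    C.mul a c = u ∧ C.mul b d = v := by
  have hmc := h2.1
  have hcat := hmc.toIsCat
  have hsb : C.src b = C.src f := by
    rw [hb, hmc.src_mul, hs, hcat.src_id, hmc.objOne_mul]
  have hcb := cinv_spec C h2 b
  have hfa : C.src f = C.tgt (cinv C h2 b) := by rw [hcb.2.1, hsb]
  have hsa : C.src a = C.tgt b := by rw [ha, hcat.src_comp _ _ hfa, hcb.1]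
  have hab : C.comp a b = f := by
    rw [ha, hcat.assoc _ _ _ hfa hcb.1, hcb.2.2.2, hsb, hcat.comp_id]
  have hsv : C.src v = C.objMul (C.src f) (C.src g) := by
    rw [← hcat.src_comp u v hu, huv, hmc.src_mul]
  have hmb : C.objMul (C.src (minv C h2 b)) (C.src f) = C.one := by
    rw [← hsb]; exact (src_minv C h2 b).2
  have hsd : C.src d = C.src g := by
    rw [hd, hmc.src_mul, hsv, ← hmc.objMul_assoc, hmb, hmc.objOne_mul]
  have hcd' := cinv_spec C h2 d
  have hgd : C.src g = C.tgt (cinv C h2 d) := by rw [hcd'.2.1, hsd]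
  have hsc : C.src c = C.tgt d := by rw [hc, hcat.src_comp _ _ hgd, hcd'.1]
  have hcd : C.comp c d = g := by
    rw [hc, hcat.assoc _ _ _ hgd hcd'.1, hcd'.2.2.2, hsd, hcat.comp_id]
  have hbd : C.mul b d = v := by
    rw [hd, ← hmc.mul_assoc, mul_minv, hmc.one_mul]
  have hac : C.mul a c = u := by
    have hint := hmc.interchange a b c d hsa hsc
    rw [hab, hcd, hbd, ← huv] at hint
    have hsac : C.src (C.mul a c) = C.tgt v := by
      rw [hmc.src_mul, hsa, hsc, ← hmc.tgt_mul, hbd]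
    have hcv := cinv_spec C h2 v
    have e1 : C.comp (C.comp (C.mul a c) v) (cinv C h2 v) = C.mul a c := by
      rw [hcat.assoc _ _ _ hsac hcv.2.1.symm, hcv.2.2.1, ← hsac, hcat.comp_id]
    have e2 : C.comp (C.comp u v) (cinv C h2 v) = u := by
      rw [hcat.assoc _ _ _ hu hcv.2.1.symm, hcv.2.2.1, ← hu, hcat.comp_id]
    calc C.mul a c = C.comp (C.comp (C.mul a c) v) (cinv C h2 v) := e1.symm
      _ = C.comp (C.comp u v) (cinv C h2 v) := by rw [← hint]
      _ = u := e2
  exact ⟨⟨hsa, hab⟩, ⟨hsc, hcd⟩, hac, hbd⟩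

lemma psi_spec {f g u v s : M}
    (hu : C.src u = C.tgt v) (huv : C.comp u v = C.mul f g)
    (hs : C.src s = C.one) :
    psi C h2 f g v s ∈ C.toCatStruct.N2 f ×ˢ C.toCatStruct.N2 g ∧
    C.mul (psi C h2 f g v s).1.1 (psi C h2 f g v s).2.1 = u ∧
    C.mul (psi C h2 f g v s).1.2 (psi C h2 f g v s).2.2 = v := by
  obtain ⟨h1, h2', h3, h4⟩ := core C h2 _ _ _ _ hu huv hs rfl rfl rfl rfl
  exact ⟨⟨h1, h2'⟩, h3, h4⟩

lemma phi_psi {f g v s : M} (hs : C.src s = C.one) :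
    C.mul (psi C h2 f g v s).1.2 (C.id (objInv C h2 (C.src f))) = s := by
  have hmc := h2.1
  simp only [psi]
  rw [hmc.mul_assoc, hmc.id_mul, (objInv_spec C h2 (C.src f)).1, hmc.mul_one]

lemma src_phi {f bm : M} (hsb : C.src bm = C.src f) :
    C.src (C.mul bm (C.id (objInv C h2 (C.src f)))) = C.one := by
  rw [h2.1.src_mul, hsb, h2.1.toIsCat.src_id, (objInv_spec C h2 (C.src f)).1]

lemma psi_phi {f g : M} {a b c d : M}
    (hab1 : C.src a = C.tgt b) (hab2 : C.comp a b = f)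
    (hcd1 : C.src c = C.tgt d) (hcd2 : C.comp c d = g) :
    psi C h2 f g (C.mul b d) (C.mul b (C.id (objInv C h2 (C.src f)))) =
      ((a, b), (c, d)) := by
  have hmc := h2.1
  have hcat := hmc.toIsCat
  have eb : C.mul (C.mul b (C.id (objInv C h2 (C.src f)))) (C.id (C.src f)) = b := by
    rw [hmc.mul_assoc, hmc.id_mul, (objInv_spec C h2 (C.src f)).2, hmc.mul_one]
  have hcb := cinv_spec C h2 b
  have ea : C.comp f (cinv C h2 b) = a := by
    rw [← hab2, hcat.assoc a b _ hab1 hcb.2.1.symm, hcb.2.2.1, ← hab1,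
      hcat.comp_id]
  have ed : C.mul (minv C h2 b) (C.mul b d) = d := by
    rw [← hmc.mul_assoc, minv_mul, hmc.one_mul]
  have hcd' := cinv_spec C h2 d
  have ec : C.comp g (cinv C h2 d) = c := by
    rw [← hcd2, hcat.assoc c d _ hcd1 hcd'.2.1.symm, hcd'.2.2.1, ← hcd1,
      hcat.comp_id]
  simp only [psi, eb]
  rw [ed, ea, ec]

end SLFAux

open SLFAux in
/-- In a locally finite strict 2-group with source subgroup
`S`, the monoidal product has the `|S|`-to-one lifting of factorisations
property: the map `N₂(f) × N₂(g) → N₂(f·g)` is surjective and every fiber has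
exactly `|S|` elements. -/
theorem twoGroup_SLF {O M : Type} (C : MonCatStruct O M)
    (h2 : C.TwoGroup) (hLF : C.toCatStruct.LocallyFinite) :
    ∀ f g : M,
      Set.SurjOn
        (fun pq : (M × M) × (M × M) =>
          (C.mul pq.1.1 pq.2.1, C.mul pq.1.2 pq.2.2))
        (C.toCatStruct.N2 f ×ˢ C.toCatStruct.N2 g)
        (C.toCatStruct.N2 (C.mul f g)) ∧
      ∀ h ∈ C.toCatStruct.N2 (C.mul f g),
        Nat.card {pq : (M × M) × (M × M) |
            pq ∈ C.toCatStruct.N2 f ×ˢ C.toCatStruct.N2 g ∧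
            (C.mul pq.1.1 pq.2.1, C.mul pq.1.2 pq.2.2) = h} =
          Nat.card {f : M | C.src f = C.one} := by
  intro f g
  constructor
  · rintro ⟨u, v⟩ ⟨hu, huv⟩
    have hs : C.src (C.id C.one) = C.one := h2.1.toIsCat.src_id C.one
    obtain ⟨hmem, hac, hbd⟩ := psi_spec C h2 hu huv hs
    refine ⟨psi C h2 f g v (C.id C.one), hmem, ?_⟩
    dsimp only
    rw [hac, hbd]
  · intro h hh
    have hu : C.src h.1 = C.tgt h.2 := hh.1
    have huv : C.comp h.1 h.2 = C.mul f g := hh.2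
    refine Nat.card_congr ?_
    refine
      { toFun := fun p =>
          ⟨C.mul p.1.1.2 (C.id (objInv C h2 (C.src f))),
            src_phi C h2 ?_⟩
        invFun := fun s => ⟨psi C h2 f g h.2 s.1, ?_⟩
        left_inv := ?_
        right_inv := ?_ }
    · -- src p.1.1.2 = src f
      have h1 : C.src p.1.1.1 = C.tgt p.1.1.2 := p.2.1.1.1
      have h2' : C.comp p.1.1.1 p.1.1.2 = f := p.2.1.1.2
      have h3 := h2.1.toIsCat.src_comp _ _ h1
      rw [h2'] at h3
      exact h3.symm
    · -- invFun membership
      obtain ⟨hmem, hac, hbd⟩ := psi_spec C h2 hu huv s.2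
      exact ⟨hmem, by rw [hac, hbd]⟩
    · -- left inverse
      rintro ⟨⟨⟨a, b⟩, ⟨c, d⟩⟩, hp⟩
      obtain ⟨⟨⟨hab1, hab2⟩, hcd1, hcd2⟩, himg⟩ := hp
      have hbd : C.mul b d = h.2 := congrArg Prod.snd himg
      apply Subtype.ext
      dsimp only
      rw [← hbd]
      exact psi_phi C h2 hab1 hab2 hcd1 hcd2
    · -- right inverse
      rintro ⟨s, hs⟩
      apply Subtype.ext
      exact phi_psi C h2 hs
end
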